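/- arXiv:math/9511207 — 4 statements merged into one kernel-verified Lean document; each statement's English description precedes it below -/
import Mathlib

section
/- Let M be a C*-algebra, f a positive linear functional on M, and x a self-adjoint element of M. Then f(|x|) ≤ ‖xf + fx‖, where xf and fx denote the functionals y ↦ f(yx) and y ↦ f(xy) respectively, and the norm is the dual norm on M*. -/
open scoped ComplexOrder
/-- For a positive linear functional `f` on a C*-algebra `M` and a self-adjoint `x`,
`f(|x|) ≤ ‖xf + fx‖` where `xf : y ↦ f (y * x)` and `fx : y ↦ f (x * y)`. -/
theorem stmt0 {M : Type*} [CStarAlgebra M] [PartialOrder M] [StarOrderedRing M]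
    (f : M →L[ℂ] ℂ) (hf : ∀ a : M, 0 ≤ a → 0 ≤ f a)
    (x : M) (hx : IsSelfAdjoint x) :
    f (CFC.sqrt (star x * x)) ≤
      (‖f.comp ((ContinuousLinearMap.mul ℂ M).flip x) + f.comp (ContinuousLinearMap.mul ℂ M x)‖ : ℂ) := by
  set g := f.comp ((ContinuousLinearMap.mul ℂ M).flip x) + f.comp (ContinuousLinearMap.mul ℂ M x) with hg
  have hgapp : ∀ a : M, g a = f (a * x) + f (x * a) := fun a => rfl
  have habs : CFC.sqrt (star x * x) = cfc (fun t : ℝ => |t|) x := by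
    have hnn : 0 ≤ cfc (fun t : ℝ => |t|) x := cfc_nonneg fun t _ => abs_nonneg t
    refine CFC.sqrt_unique ?_ hnn
    rw [← cfc_mul _ _ x, hx.star_eq]
    conv_rhs => rw [← cfc_id ℝ x hx, ← cfc_mul _ _ x]
    exact cfc_congr fun t _ => (abs_mul_abs_self t)
  set b := CFC.sqrt (star x * x) with hb
  have hbnn : 0 ≤ b := CFC.sqrt_nonneg _
  have hfb : 0 ≤ f b := hf b hbnn
  -- key real estimate
  have key : (f b).re ≤ ‖g‖ / 2 := by
    by_contra hcon
    push_neg at hcon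
    have hδpos : 0 < (f b).re - ‖g‖ / 2 := by linarith
    set δ := (f b).re - ‖g‖ / 2 with hδ
    set ε := δ / (‖f‖ + 1) with hε
    have hεpos : 0 < ε := div_pos hδpos (by positivity)
    -- the approximate sign function
    have hcont : Continuous fun t : ℝ => t / (|t| + ε) := by
      apply continuous_id.div (continuous_abs.add continuous_const)
      intro t
      have : (0:ℝ) < |t| + ε := add_pos_of_nonneg_of_pos (abs_nonneg t) hεpos
      exact this.ne'
    set a := cfc (fun t : ℝ => t / (|t| + ε)) x with ha
    have hanorm : ‖a‖ ≤ 1 := by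
      refine norm_cfc_le zero_le_one fun t _ => ?_
      have hden : (0:ℝ) < |t| + ε := add_pos_of_nonneg_of_pos (abs_nonneg t) hεpos
      rw [Real.norm_eq_abs, abs_div, abs_of_pos hden, div_le_one hden]
      exact le_add_of_nonneg_right hεpos.le
    have hax : a * x = cfc (fun t : ℝ => t / (|t| + ε) * t) x := by
      conv_lhs => rw [← cfc_id ℝ x hx]
      rw [← cfc_mul _ _ x hcont.continuousOn continuous_id.continuousOn]
      exact cfc_congr fun t _ => rfl
    have hxa : x * a = a * x := by
      conv_lhs => rw [← cfc_id ℝ x hx]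
      rw [← cfc_mul _ _ x continuous_id.continuousOn hcont.continuousOn, hax]
      exact cfc_congr fun t _ => mul_comm _ _
    have hdiff : ‖b - a * x‖ ≤ ε := by
      rw [habs, hax,
        ← cfc_sub (fun t : ℝ => |t|) (fun t : ℝ => t / (|t| + ε) * t) x
          continuous_abs.continuousOn
          (Continuous.continuousOn (by exact hcont.mul continuous_id))]
      refine norm_cfc_le hεpos.le fun t _ => ?_
      have hden : (0:ℝ) < |t| + ε := add_pos_of_nonneg_of_pos (abs_nonneg t) hεpos
      have heq : |t| - t / (|t| + ε) * t = ε * |t| / (|t| + ε) := by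
        field_simp
        rw [← sq_abs t]
        ring
      rw [Real.norm_eq_abs, heq, abs_of_nonneg (by positivity)]
      rw [div_le_iff₀ hden]
      nlinarith [abs_nonneg t, hεpos.le]
    have hga : g a = 2 * f (a * x) := by
      rw [hgapp, hxa]; ring
    have hfax : ‖f (a * x)‖ ≤ ‖g‖ / 2 := by
      have h1 : ‖g a‖ ≤ ‖g‖ := by
        calc ‖g a‖ = ‖g a‖ := rfl
          _ ≤ ‖g‖ * ‖a‖ := g.le_opNorm a
          _ ≤ ‖g‖ * 1 := by gcongr
          _ = ‖g‖ := mul_one _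
      rw [hga, norm_mul] at h1
      simp only [Complex.norm_two] at h1
      linarith
    have hfdiff : ‖f (b - a * x)‖ ≤ ‖f‖ * ε := by
      calc ‖f (b - a * x)‖ = ‖f (b - a * x)‖ := rfl
        _ ≤ ‖f‖ * ‖b - a * x‖ := f.le_opNorm _
        _ ≤ ‖f‖ * ε := by gcongr
    have hsplit : f b = f (b - a * x) + f (a * x) := by
      rw [← map_add, sub_add_cancel]
    have hre : (f b).re ≤ ‖f b‖ := Complex.re_le_norm _
    have habsfb : ‖f b‖ ≤ ‖f‖ * ε + ‖g‖ / 2 := by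
      rw [hsplit]
      calc ‖f (b - a * x) + f (a * x)‖
          ≤ ‖f (b - a * x)‖ + ‖f (a * x)‖ := norm_add_le _ _
        _ ≤ ‖f‖ * ε + ‖g‖ / 2 := add_le_add hfdiff hfax
    have hfε : ‖f‖ * ε < δ := by
      rw [hε]
      calc ‖f‖ * (δ / (‖f‖ + 1)) < (‖f‖ + 1) * (δ / (‖f‖ + 1)) := by
            apply mul_lt_mul_of_pos_right (by linarith) (div_pos hδpos (by positivity))
        _ = δ := by field_simp
    have : (f b).re ≤ ‖f‖ * ε + ‖g‖ / 2 := hre.trans habsfb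
    rw [hδ] at hfε
    linarith
  -- convert to complex
  have hfbre : f b = ((f b).re : ℂ) := by
    have him : (f b).im = 0 := by
      have h0 := hfb
      rw [Complex.le_def] at h0
      simpa using h0.2.symm
    exact Complex.ext (by simp) (by simp [him])
  rw [hfbre, Complex.real_le_real]
  calc (f b).re ≤ ‖g‖ / 2 := key
    _ ≤ ‖g‖ := by linarith [norm_nonneg g]
end

section
/- Let M be a C*-algebra, f a positive linear functional on M, and x any element of M. Then f(((xx* + x*x)/2)^{1/2}) ≤ 2‖xf + fx‖. -/
set_option maxHeartbeats 1000000
open scoped ComplexOrder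
open ComplexConjugate

section aux
variable {M : Type*} [CStarAlgebra M] [PartialOrder M] [StarOrderedRing M]

private lemma conj_of_nonneg' {w : ℂ} (hw : 0 ≤ w) : conj w = w := by
  rw [Complex.conj_eq_iff_im]
  exact (Complex.nonneg_iff.mp hw).2.symm

private lemma map_sa_real' (f : M →L[ℂ] ℂ) (hf : ∀ a : M, 0 ≤ a → 0 ≤ f a)
    {s : M} (hs : IsSelfAdjoint s) : conj (f s) = f s := by
  have h1 := hf _ (CFC.posPart_nonneg s)
  have h2 := hf _ (CFC.negPart_nonneg s)
  have : f s = f (s⁺) - f (s⁻) := by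
    rw [← map_sub]
    congr 1
    exact (CFC.posPart_sub_negPart s hs).symm
  rw [this, map_sub, conj_of_nonneg' h1, conj_of_nonneg' h2]

private lemma map_star_posfun' (f : M →L[ℂ] ℂ) (hf : ∀ a : M, 0 ≤ a → 0 ≤ f a)
    (z : M) : f (star z) = conj (f z) := by
  have hu : IsSelfAdjoint (z + star z) := by
    rw [IsSelfAdjoint, star_add, star_star, add_comm]
  have hw : IsSelfAdjoint (Complex.I • (z - star z)) := by
    rw [IsSelfAdjoint, star_smul, star_sub, star_star, Complex.star_def, Complex.conj_I,
      neg_smul, ← smul_neg, neg_sub]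
  have e1 := map_sa_real' f hf hu
  have e2 := map_sa_real' f hf hw
  rw [map_add] at e1
  rw [map_smul, map_sub] at e2
  set p := f z
  set q := f (star z)
  simp only [Complex.ext_iff, smul_eq_mul, Complex.add_re, Complex.add_im, Complex.conj_re,
    Complex.conj_im, Complex.mul_re, Complex.mul_im, Complex.sub_re, Complex.sub_im,
    Complex.I_re, Complex.I_im] at e1 e2 ⊢
  obtain ⟨a1, b1⟩ := e1
  obtain ⟨a2, b2⟩ := e2
  constructor <;> nlinarith [a1, b1, a2, b2]

end aux

/-- For a positive linear functional `f` on a C*-algebra `M` and any `x ∈ M`,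
`f (((x x* + x* x)/2)^(1/2)) ≤ 2 ‖xf + fx‖`. -/
theorem stmt1 {M : Type*} [CStarAlgebra M] [PartialOrder M] [StarOrderedRing M]
    (f : M →L[ℂ] ℂ) (hf : ∀ a : M, 0 ≤ a → 0 ≤ f a) (x : M) :
    f (CFC.sqrt ((2 : ℂ)⁻¹ • (x * star x + star x * x))) ≤
      (2 * ‖f.comp ((ContinuousLinearMap.mul ℂ M).flip x)
        + f.comp (ContinuousLinearMap.mul ℂ M x)‖ : ℂ) := by
  set G : M →L[ℂ] ℂ := f.comp ((ContinuousLinearMap.mul ℂ M).flip x)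
        + f.comp (ContinuousLinearMap.mul ℂ M x) with hGdef
  have hG : ∀ y : M, G y = f (y * x) + f (x * y) := fun y => rfl
  set b : M := x * star x + star x * x with hbdef
  have hb : 0 ≤ b := add_nonneg (mul_star_self_nonneg x) (star_mul_self_nonneg x)
  set a : M := (2 : ℂ)⁻¹ • b with hadef
  have ha : 0 ≤ a := smul_nonneg (by rw [Complex.nonneg_iff]; norm_num) hb
  have h2a : (2 : ℂ) • a = b := by
    rw [hadef, smul_smul]
    norm_num
  set h : M := CFC.sqrt a with hhdef
  have hh : 0 ≤ h := CFC.sqrt_nonneg (a := a)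
  have hhsa : IsSelfAdjoint h := IsSelfAdjoint.of_nonneg hh
  have hspec : ∀ t ∈ spectrum ℝ h, 0 ≤ t := fun t ht => spectrum_nonneg_of_nonneg hh ht
  have hh2 : h * h = a := by rw [← sq]; exact CFC.sq_sqrt a ha
  have hstarf : ∀ z : M, f (star z) = conj (f z) := map_star_posfun' f hf
  have hmono : ∀ u v : M, u ≤ v → (f u).re ≤ (f v).re := by
    intro u v huv
    have h0 := hf _ (sub_nonneg.mpr huv)
    rw [map_sub] at h0
    have := (Complex.nonneg_iff.mp h0).1
    simp only [Complex.sub_re] at this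
    linarith
  -- the key estimate for each ε > 0
  have key : ∀ ε : ℝ, 0 < ε → (f h).re ≤ Real.sqrt 2 * ‖G‖ + ε * (f 1).re := by
    intro ε hε
    set r : ℝ → ℝ := fun t => (max t ε)⁻¹ with hrdef
    have hrc : Continuous r := by
      refine (continuous_id.max continuous_const).inv₀ fun t => ?_
      exact (lt_max_iff.mpr (Or.inr hε)).ne'
    set k : M := cfc r h with hkdef
    have hk0 : 0 ≤ k := cfc_nonneg fun t _ =>
      inv_nonneg.mpr (le_trans hε.le (le_max_right t ε))
    have hksa : IsSelfAdjoint k := IsSelfAdjoint.of_nonneg hk0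
    -- cfc computations
    have hrt : ∀ t, r t = (max t ε)⁻¹ := fun _ => rfl
    have hidid : cfc (fun t : ℝ => t * t) h = h * h := by
      rw [cfc_mul (fun t : ℝ => t) (fun t : ℝ => t) h (by fun_prop) (by fun_prop), cfc_id' ℝ h]
    have hak : a * k = cfc (fun t => t * t * r t) h := by
      rw [cfc_mul (fun t : ℝ => t * t) r h (by fun_prop) hrc.continuousOn, hidid, hh2]
    have hka : k * a = a * k := by
      rw [hak, ← hh2, ← hidid, hkdef,
        ← cfc_mul r (fun t : ℝ => t * t) h hrc.continuousOn (by fun_prop)]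
      exact cfc_congr fun t _ => mul_comm _ _
    have hkak : k * a * k = cfc (fun t => (t * r t) ^ 2) h := by
      rw [mul_assoc, hak, hkdef, ← cfc_mul r (fun t : ℝ => t * t * r t) h hrc.continuousOn (by fun_prop)]
      exact cfc_congr fun t _ => by ring
    have htr1 : ∀ t ∈ spectrum ℝ h, 0 ≤ t * r t ∧ t * r t ≤ 1 := by
      intro t ht
      have ht0 := hspec t ht
      constructor
      · exact mul_nonneg ht0 (inv_nonneg.mpr (le_trans hε.le (le_max_right t ε)))
      · rw [hrt]
        rcases le_or_gt t ε with hle | hlt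
        · rw [max_eq_right hle, ← div_eq_mul_inv]
          exact (div_le_one hε).mpr hle
        · rw [max_eq_left hlt.le, mul_inv_cancel₀ (lt_trans hε hlt).ne']
    have hkaknorm : ‖k * a * k‖ ≤ 1 := by
      rw [hkak]
      refine norm_cfc_le zero_le_one fun t ht => ?_
      obtain ⟨h0, h1⟩ := htr1 t ht
      rw [Real.norm_eq_abs, abs_of_nonneg (by positivity)]
      nlinarith
    have hnorm2 : ‖(2 : ℂ) • (k * a * k)‖ ≤ 2 := by
      rw [norm_smul]
      simpa using mul_le_mul_of_nonneg_left hkaknorm (by norm_num : (0:ℝ) ≤ 2)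
    -- norm bounds on x * k and star x * k
    have hxxle : star x * x ≤ (2 : ℂ) • a := by
      rw [h2a, hbdef]
      exact le_add_of_nonneg_left (mul_star_self_nonneg x)
    have hxxle' : x * star x ≤ (2 : ℂ) • a := by
      rw [h2a, hbdef]
      exact le_add_of_nonneg_right (star_mul_self_nonneg x)
    have hsandwich : ∀ c : M, 0 ≤ c → c ≤ (2 : ℂ) • a → ‖k * c * k‖ ≤ 2 := by
      intro c hc0 hcle
      have h1 : k * c * k ≤ k * ((2 : ℂ) • a) * k := by
        have := star_left_conjugate_le_conjugate hcle k
        rwa [hksa.star_eq] at this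
      have h3 : 0 ≤ k * c * k := by
        have := star_left_conjugate_nonneg hc0 k
        rwa [hksa.star_eq] at this
      calc ‖k * c * k‖ ≤ ‖k * ((2 : ℂ) • a) * k‖ :=
            CStarAlgebra.norm_le_norm_of_nonneg_of_le h3 h1
        _ = ‖(2 : ℂ) • (k * a * k)‖ := by rw [mul_smul_comm, smul_mul_assoc]
        _ ≤ 2 := hnorm2
    have hxk : ‖x * k‖ ≤ Real.sqrt 2 := by
      have h5 : ‖x * k‖ * ‖x * k‖ = ‖k * (star x * x) * k‖ := by
        rw [← CStarRing.norm_star_mul_self (x := x * k), star_mul, hksa.star_eq]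
        congr 1
        noncomm_ring
      have h4 := hsandwich _ (star_mul_self_nonneg x) hxxle
      nlinarith [Real.sq_sqrt (by norm_num : (0:ℝ) ≤ 2), Real.sqrt_nonneg 2,
        norm_nonneg (x * k)]
    have hx'k : ‖star x * k‖ ≤ Real.sqrt 2 := by
      have h5 : ‖star x * k‖ * ‖star x * k‖ = ‖k * (x * star x) * k‖ := by
        rw [← CStarRing.norm_star_mul_self (x := star x * k), star_mul, hksa.star_eq, star_star]
        congr 1
        noncomm_ring
      have h4 := hsandwich _ (mul_star_self_nonneg x) hxxle'
      nlinarith [Real.sq_sqrt (by norm_num : (0:ℝ) ≤ 2), Real.sqrt_nonneg 2,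
        norm_nonneg (star x * k)]
    set y : M := star x * k + k * star x with hydef
    have hy : ‖y‖ ≤ 2 * Real.sqrt 2 := by
      have he : ‖k * star x‖ = ‖x * k‖ := by
        rw [← norm_star (k * star x), star_mul, star_star, hksa.star_eq]
      calc ‖y‖ ≤ ‖star x * k‖ + ‖k * star x‖ := norm_add_le _ _
        _ ≤ Real.sqrt 2 + Real.sqrt 2 := by rw [he]; exact add_le_add hx'k hxk
        _ = 2 * Real.sqrt 2 := by ring
    -- Step A : Re (G y) ≥ 2 Re (f (a * k))
    have hGy : G y = f (star x * k * x) + f (x * k * star x)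
        + (f (k * (star x * x)) + f (x * star x * k)) := by
      have hel : y * x + x * y = (star x * k * x + x * k * star x)
          + (k * (star x * x) + x * star x * k) := by
        rw [hydef]; noncomm_ring
      rw [hG, ← map_add, hel, map_add, map_add, map_add]
    have hT1 : 0 ≤ f (star x * k * x) := hf _ (star_left_conjugate_nonneg hk0 x)
    have hT4 : 0 ≤ f (x * k * star x) := by
      refine hf _ ?_
      have := star_left_conjugate_nonneg hk0 (star x)
      rwa [star_star] at this
    have hc1 : conj (f (k * (star x * x))) = f ((star x * x) * k) := by
      rw [← hstarf]
      congr 1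
      rw [star_mul, star_mul, hksa.star_eq, star_star]
    have hc2 : conj (f (x * star x * k)) = f (k * (x * star x)) := by
      rw [← hstarf]
      congr 1
      rw [star_mul, hksa.star_eq, star_mul, star_star]
    have hsum : f (k * (star x * x)) + f ((star x * x) * k)
        + (f (x * star x * k) + f (k * (x * star x)))
        = (4 : ℂ) * f (a * k) := by
      rw [← map_add, ← map_add, ← map_add]
      have helt : k * (star x * x) + star x * x * k + (x * star x * k + k * (x * star x))
          = (4 : ℂ) • (a * k) := by
        have : k * (star x * x) + star x * x * k + (x * star x * k + k * (x * star x))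
            = k * b + b * k := by rw [hbdef]; noncomm_ring
        rw [this, ← h2a, mul_smul_comm, smul_mul_assoc, hka]
        module
      rw [helt, map_smul, smul_eq_mul]
    have hmid : (f (k * (star x * x)) + f (x * star x * k)).re
        = 2 * (f (a * k)).re := by
      have e : (f (k * (star x * x)) + f (x * star x * k)).re
          = (f (k * (star x * x)) + f ((star x * x) * k)
            + (f (x * star x * k) + f (k * (x * star x)))).re / 2 := by
        rw [← hc1, ← hc2]
        simp only [Complex.add_re, Complex.conj_re]
        ring
      rw [e, hsum]
      simp only [Complex.mul_re]
      norm_num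
      ring
    have hA : 2 * (f (a * k)).re ≤ ‖G‖ * (2 * Real.sqrt 2) := by
      have h1 : 2 * (f (a * k)).re ≤ (G y).re := by
        rw [hGy, Complex.add_re, hmid, Complex.add_re]
        have t1 := (Complex.nonneg_iff.mp hT1).1
        have t4 := (Complex.nonneg_iff.mp hT4).1
        linarith
      have h2 : (G y).re ≤ ‖G y‖ := by
        calc (G y).re ≤ |(G y).re| := le_abs_self _
          _ ≤ ‖G y‖ := Complex.abs_re_le_norm _
      have h3 : ‖G y‖ ≤ ‖G‖ * ‖y‖ := G.le_opNorm y
      have h4 : ‖G‖ * ‖y‖ ≤ ‖G‖ * (2 * Real.sqrt 2) :=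
        mul_le_mul_of_nonneg_left hy (norm_nonneg G)
      linarith
    have hfak : (f (a * k)).re ≤ Real.sqrt 2 * ‖G‖ := by nlinarith [hA]
    -- Step C : f h ≤ f (a k) + ε f 1
    have hsub : h - a * k = cfc (fun t => t - t * t * r t) h := by
      rw [cfc_sub (fun t : ℝ => t) (fun t : ℝ => t * t * r t) h (by fun_prop) (by fun_prop),
        cfc_id' ℝ h, ← hak]
    have hcle : h - a * k ≤ algebraMap ℝ M ε := by
      rw [hsub, ← cfc_const ε h]
      refine cfc_mono (fun t ht => ?_) ?_ ?_
      · rw [hrt]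
        rcases le_or_gt t ε with hle | hlt
        · rw [max_eq_right hle]
          have : 0 ≤ t * t * ε⁻¹ := mul_nonneg (mul_self_nonneg t) (inv_nonneg.mpr hε.le)
          rcases le_or_gt 0 t with h0 | h0
          · linarith
          · linarith
        · rw [max_eq_left hlt.le, ← div_eq_mul_inv,
            mul_div_assoc]
          rw [div_self (lt_trans hε hlt).ne']
          simp [hε.le]
      · exact ((by fun_prop : Continuous fun t : ℝ => t - t * t * r t)).continuousOn
      · exact continuous_const.continuousOn
    have hfeps : (f (algebraMap ℝ M ε)).re = ε * (f 1).re := by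
      rw [Algebra.algebraMap_eq_smul_one, f.map_smul_of_tower]
      simp [Complex.real_smul]
    have hstep : (f (h - a * k)).re ≤ ε * (f 1).re := by
      rw [← hfeps]
      exact hmono _ _ hcle
    rw [map_sub] at hstep
    simp only [Complex.sub_re] at hstep
    linarith
  -- conclude: let ε → 0
  have hf1 : 0 ≤ (f 1).re := (Complex.nonneg_iff.mp (hf 1 zero_le_one)).1
  have hre : (f h).re ≤ Real.sqrt 2 * ‖G‖ := by
    refine le_of_forall_pos_le_add fun δ hδ => ?_
    have hε : 0 < δ / ((f 1).re + 1) := by positivity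
    have h1 := key _ hε
    have h2 : δ / ((f 1).re + 1) * (f 1).re ≤ δ := by
      rw [div_mul_eq_mul_div, div_le_iff₀ (by positivity)]
      nlinarith
    linarith
  have hsq2 : Real.sqrt 2 ≤ 2 := by
    nlinarith [Real.sq_sqrt (by norm_num : (0:ℝ) ≤ 2), Real.sqrt_nonneg 2]
  have hfh0 := hf h hh
  rw [Complex.le_def]
  constructor
  · have : Real.sqrt 2 * ‖G‖ ≤ 2 * ‖G‖ :=
      mul_le_mul_of_nonneg_right hsq2 (norm_nonneg G)
    simp only [Complex.mul_re, Complex.ofReal_re, Complex.ofReal_im, Complex.re_ofNat,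
      Complex.im_ofNat]
    linarith
  · simp only [Complex.mul_im, Complex.ofReal_re, Complex.ofReal_im, Complex.re_ofNat,
      Complex.im_ofNat]
    have := (Complex.nonneg_iff.mp hfh0).2
    linarith
end

section
/- Let E be a Banach space containing no isomorphic copy of ℓ¹ and F a Banach space, and let S : E → F be a bounded operator such that every weakly null sequence (eₙ) in E satisfies ‖S eₙ‖ → 0 (S is completely continuous). Then S maps the closed unit ball of E to a relatively norm-compact set, i.e. S is compact. -/
open Filter Topology Metric

namespace Ros

/-- Dependent-choice style sequence builder. -/
lemma exists_seq {α : Type*} (P : ℕ → α → Prop) (R : ℕ → α → α → Prop)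
    (h0 : ∃ a, P 0 a) (hstep : ∀ k a, P k a → ∃ b, P (k+1) b ∧ R k a b) :
    ∃ g : ℕ → α, (∀ k, P k (g k)) ∧ ∀ k, R k (g k) (g (k+1)) := by
  choose a0 ha0 using h0
  choose! f hf hR using hstep
  refine ⟨fun k => Nat.rec a0 (fun k ih => f k ih) k, ?_, ?_⟩
  · intro k
    induction k with
    | zero => exact ha0
    | succ k ih => exact hf k _ ih
  · intro k
    have hP : ∀ k, P k (Nat.rec a0 (fun k ih => f k ih) k : α) := by
      intro k
      induction k with
      | zero => exact ha0
      | succ k ih => exact hf k _ ih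
    exact hR k _ (hP k)

/-- `l` is a strictly sorted list with entries in `N`. -/
def Stem (N : Set ℕ) (l : List ℕ) : Prop := l.Pairwise (· < ·) ∧ ∀ x ∈ l, x ∈ N

def Tail (N : Set ℕ) (s : List ℕ) : Set ℕ := {x ∈ N | ∀ m ∈ s, m < x}

lemma tail_infinite {N : Set ℕ} (hN : N.Infinite) (s : List ℕ) : (Tail N s).Infinite := by
  have : N \ {x | ∃ m ∈ s, x ≤ m} ⊆ Tail N s := by
    rintro x ⟨hx, hx2⟩
    refine ⟨hx, fun m hm => ?_⟩
    by_contra h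
    exact hx2 ⟨m, hm, le_of_not_gt h⟩
  refine Set.Infinite.mono this (hN.diff ?_)
  have : {x | ∃ m ∈ s, x ≤ m} ⊆ ⋃ m ∈ s, Set.Iic m := by
    rintro x ⟨m, hm, hx⟩; exact Set.mem_biUnion hm hx
  exact Set.Finite.subset (Set.Finite.biUnion (s.finite_toSet) (fun m _ => Set.finite_Iic m)) this

variable (F : List ℕ → Prop)

/-- `N` accepts stem `s`. -/
def Acpt (N : Set ℕ) (s : List ℕ) : Prop :=
  ∀ f : ℕ → ℕ, StrictMono f → (∀ i, f i ∈ N) → ∃ k, F (s ++ (List.range k).map f)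

def Rejs (N : Set ℕ) (s : List ℕ) : Prop :=
  ∀ N', N' ⊆ N → N'.Infinite → ¬ Acpt F N' s

variable {F}

lemma Acpt.mono {N N' s} (h : Acpt F N s) (hsub : N' ⊆ N) : Acpt F N' s :=
  fun f hf hr => h f hf (fun i => hsub (hr i))

lemma Rejs.mono {N N' s} (h : Rejs F N s) (hsub : N' ⊆ N) : Rejs F N' s :=
  fun M hM => h M (hM.trans hsub)

lemma acpt_of_F {N : Set ℕ} {s} (h : F s) : Acpt F N s :=
  fun f _ _ => ⟨0, by simpa using h⟩

lemma acptOrRejs (N : Set ℕ) (s : List ℕ) :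
    (∃ N', N' ⊆ N ∧ N'.Infinite ∧ Acpt F N' s) ∨ Rejs F N s := by
  by_cases h : ∃ N', N' ⊆ N ∧ N'.Infinite ∧ Acpt F N' s
  · exact Or.inl h
  · exact Or.inr (fun N' h1 h2 h3 => h ⟨N', h1, h2, h3⟩)

/-- finitely many stems over a finite set -/
lemma stems_finite (T : Finset ℕ) : {l : List ℕ | Stem (↑T) l}.Finite := by
  have : {l : List ℕ | Stem (↑T) l} ⊆
      (fun (s : Finset ℕ) => Finset.sort s (· ≤ ·)) '' ↑T.powerset := by
    rintro l ⟨hsort, hmem⟩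
    refine ⟨l.toFinset, ?_, ?_⟩
    · simp only [Finset.coe_powerset, Set.mem_preimage, Set.mem_powerset_iff,
        Finset.coe_subset]
      intro x hx
      simp only [List.mem_toFinset] at hx
      exact hmem x hx
    · have hnd : l.Nodup := hsort.nodup
      have hperm : (Finset.sort l.toFinset (· ≤ ·)).Perm l := by
        refine List.perm_of_nodup_nodup_toFinset_eq (Finset.sort_nodup _ _) hnd ?_
        rw [Finset.sort_toFinset]
      exact (Finset.sortedLT_sort _).pairwise.eq_of_mem_iff hsort (fun a => hperm.mem_iff)
  exact Set.Finite.subset (Set.Finite.image _ (T.powerset.finite_toSet)) this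

/-- decide all stems in a finite set of stems -/
lemma decideSet {Lset : Set (List ℕ)} (hL : Lset.Finite) :
    ∀ N : Set ℕ, N.Infinite → ∃ N', N' ⊆ N ∧ N'.Infinite ∧
      ∀ s ∈ Lset, Acpt F N' s ∨ Rejs F N' s := by
  refine Set.Finite.induction_on _ hL ?_ ?_
  · exact fun N hN => ⟨N, le_refl _, hN, by simp⟩
  · rintro s Lset' _ _ ih N hN
    obtain ⟨N₁, hsub, hinf, hdec⟩ := ih N hN
    rcases acptOrRejs (F := F) N₁ s with ⟨N₂, h1, h2, h3⟩ | hrej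
    · refine ⟨N₂, h1.trans hsub, h2, ?_⟩
      intro t ht
      rcases Set.mem_insert_iff.1 ht with rfl | ht
      · exact Or.inl h3
      · rcases hdec t ht with h | h
        · exact Or.inl (h.mono h1)
        · exact Or.inr (h.mono h1)
    · refine ⟨N₁, hsub, hinf, ?_⟩
      intro t ht
      rcases Set.mem_insert_iff.1 ht with rfl | ht
      · exact Or.inr hrej
      · exact hdec t ht

end Ros

namespace Ros
variable {F : List ℕ → Prop}

lemma inter_Ioi_infinite {N : Set ℕ} (hN : N.Infinite) (m : ℕ) : (N ∩ Set.Ioi m).Infinite := by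
  refine (hN.diff (Set.finite_Iic m)).mono ?_
  rintro x ⟨h1, h2⟩
  exact ⟨h1, by simpa using h2⟩

/-- Fusion: an infinite subset all of whose stems are decided on tails. -/
lemma fusion {N₀ : Set ℕ} (hN₀ : N₀.Infinite) (hrej : Rejs F N₀ []) :
    ∃ N, N ⊆ N₀ ∧ N.Infinite ∧
      ∀ s, Stem N s → Acpt F (Tail N s) s ∨ Rejs F (Tail N s) s := by
  classical
  set P : ℕ → Finset ℕ × Set ℕ → Prop := fun _ p =>
    p.2.Infinite ∧ p.2 ⊆ N₀ ∧ ↑p.1 ⊆ N₀ ∧ (∀ x ∈ p.1, ∀ y ∈ p.2, x < y) ∧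
    (∀ s, Stem ↑p.1 s → Acpt F p.2 s ∨ Rejs F p.2 s) with hP
  set R : ℕ → Finset ℕ × Set ℕ → Finset ℕ × Set ℕ → Prop := fun _ p q =>
    p.1 ⊆ q.1 ∧ q.2 ⊆ p.2 ∧ ∃ m, m ∈ p.2 ∧ q.1 = insert m p.1 with hR
  have h0 : ∃ p, P 0 p := by
    refine ⟨(∅, N₀), hN₀, le_refl _, by simp, by simp, ?_⟩
    intro s hs
    have : s = [] := by
      cases s with
      | nil => rfl
      | cons a t => exact absurd (hs.2 a (by simp)) (by simp)
    subst this
    exact Or.inr hrej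
  have hstep : ∀ k p, P k p → ∃ q, P (k+1) q ∧ R k p q := by
    rintro k ⟨T, N⟩ ⟨hinf, hNsub, hTsub, hord, _hdec⟩
    obtain ⟨m, hm⟩ := hinf.nonempty
    have hinf' : (N ∩ Set.Ioi m).Infinite := inter_Ioi_infinite hinf m
    obtain ⟨N', hsub', hinf'', hdec'⟩ :=
      decideSet (F := F) (stems_finite (insert m T)) _ hinf'
    refine ⟨(insert m T, N'), ⟨hinf'', ?_, ?_, ?_, ?_⟩, ?_, ?_, m, hm, rfl⟩
    · exact (hsub'.trans (Set.inter_subset_left)).trans hNsub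
    · intro x hx
      rcases Finset.mem_insert.1 (by exact_mod_cast hx) with rfl | hx'
      · exact hNsub hm
      · exact hTsub hx'
    · intro x hx y hy
      have hy' := hsub' hy
      rcases Finset.mem_insert.1 hx with rfl | hx'
      · exact hy'.2
      · exact lt_trans (hord x hx' m hm) hy'.2
    · exact fun s hs => hdec' s hs
    · exact Finset.subset_insert _ _
    · exact hsub'.trans (Set.inter_subset_left)
  obtain ⟨g, hPg, hRg⟩ := exists_seq P R h0 hstep
  set T : ℕ → Finset ℕ := fun k => (g k).1 with hT
  set Ns : ℕ → Set ℕ := fun k => (g k).2 with hNs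
  choose mseq hmseqN hmseqT using fun k => (hRg k).2.2
  have hTmono : ∀ {j k}, j ≤ k → T j ⊆ T k := by
    intro j k h
    induction h with
    | refl => exact Finset.Subset.refl _
    | step h ih => exact ih.trans (hRg _).1
  have hNmono : ∀ {j k}, j ≤ k → Ns k ⊆ Ns j := by
    intro j k h
    induction h with
    | refl => exact le_refl _
    | step h ih => exact ((hRg _).2.1).trans ih
  have hmT : ∀ k, mseq k ∈ T (k+1) := fun k => by
    show mseq k ∈ (g (k+1)).1
    rw [hmseqT k]; exact Finset.mem_insert_self _ _
  have hmono : StrictMono mseq := by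
    have : ∀ j k, j < k → mseq j < mseq k := by
      intro j k hjk
      have h1 : mseq j ∈ T k := hTmono hjk (hmT j)
      exact (hPg k).2.2.2.1 _ h1 _ (hmseqN k)
    exact fun j k h => this j k h
  have hmN : ∀ {j k}, j ≤ k → mseq k ∈ Ns j := fun h => hNmono h (hmseqN _)
  refine ⟨Set.range mseq, ?_, ?_, ?_⟩
  · rintro x ⟨k, rfl⟩
    exact (hPg k).2.1 (hmseqN k)
  · exact Set.infinite_range_of_injective hmono.injective
  · have hidx : ∀ s : List ℕ, (∀ x ∈ s, x ∈ Set.range mseq) →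
        ∃ j, (∀ x ∈ s, ∃ k, k < j ∧ mseq k = x) ∧
        (∀ k, (∀ m ∈ s, m < mseq k) → j ≤ k) := by
      intro s
      induction s with
      | nil => exact fun _ => ⟨0, by simp, by simp⟩
      | cons a t ih =>
        intro hmem
        obtain ⟨j, h1, h2⟩ := ih (fun x hx => hmem x (List.mem_cons_of_mem a hx))
        obtain ⟨k₀, hk₀⟩ := hmem a (List.mem_cons_self)
        refine ⟨max j (k₀+1), ?_, ?_⟩
        · intro x hx
          rcases List.mem_cons.1 hx with rfl | hx'
          · exact ⟨k₀, lt_of_lt_of_le (Nat.lt_succ_self _) (le_max_right _ _), hk₀⟩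
          · obtain ⟨k, hk, hkx⟩ := h1 x hx'
            exact ⟨k, lt_of_lt_of_le hk (le_max_left _ _), hkx⟩
        · intro k hk
          refine max_le (h2 k (fun m hm => hk m (List.mem_cons_of_mem a hm))) ?_
          have h3 := hk a (List.mem_cons_self)
          rw [← hk₀] at h3
          exact Nat.succ_le_of_lt (hmono.lt_iff_lt.1 h3)
    intro s hs
    obtain ⟨j, h1, h2⟩ := hidx s hs.2
    have hstem : Stem (↑(T j)) s := by
      refine ⟨hs.1, fun x hx => ?_⟩
      obtain ⟨k, hk, rfl⟩ := h1 x hx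
      exact hTmono hk (hmT k)
    have htail : Tail (Set.range mseq) s ⊆ Ns j := by
      rintro x ⟨⟨k, rfl⟩, hx2⟩
      exact hmN (h2 k hx2)
    rcases (hPg j).2.2.2.2 s hstem with h | h
    · exact Or.inl (h.mono htail)
    · exact Or.inr (h.mono htail)

end Ros

namespace Ros

theorem galvin (F : List ℕ → Prop) {M : Set ℕ} (hM : M.Infinite) :
    (∃ N, N ⊆ M ∧ N.Infinite ∧ Acpt F N []) ∨
    (∃ N, N ⊆ M ∧ N.Infinite ∧ ∀ l, Stem N l → ¬ F l) := by
  classical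
  rcases acptOrRejs (F := F) M [] with ⟨N, h1, h2, h3⟩ | hrej
  · exact Or.inl ⟨N, h1, h2, h3⟩
  right
  obtain ⟨Nst, hsub, hinf, hdec⟩ := fusion hM hrej
  -- rejection propagation
  have hprop : ∀ s, Stem Nst s → Rejs F (Tail Nst s) s →
      {n ∈ Tail Nst s | ¬ Rejs F (Tail Nst (s++[n])) (s++[n])}.Finite := by
    intro s hs hrejs
    by_contra hXinf
    refine hrejs _ (Set.sep_subset _ _) hXinf ?_
    intro f hf hfr
    have hn := hfr 0
    have hstem' : Stem Nst (s ++ [f 0]) := by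
      constructor
      · rw [List.pairwise_append]
        exact ⟨hs.1, by simp, by simpa using hn.1.2⟩
      · intro x hx
        rcases List.mem_append.1 hx with hx | hx
        · exact hs.2 x hx
        · simp only [List.mem_singleton] at hx; subst hx; exact hn.1.1
    have hacpt : Acpt F (Tail Nst (s ++ [f 0])) (s ++ [f 0]) := by
      rcases hdec _ hstem' with h | h
      · exact h
      · exact absurd h hn.2
    have hf' : StrictMono (fun i => f (i+1)) := fun a b h => hf (by omega)
    have hfr' : ∀ i, f (i+1) ∈ Tail Nst (s ++ [f 0]) := by
      intro i
      have hx := hfr (i+1)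
      refine ⟨hx.1.1, ?_⟩
      intro m hm
      rcases List.mem_append.1 hm with hm | hm
      · exact hx.1.2 m hm
      · simp only [List.mem_singleton] at hm; subst hm
        exact hf (by omega)
    obtain ⟨k, hk⟩ := hacpt _ hf' hfr'
    refine ⟨k+1, ?_⟩
    have hlist : (List.range (k+1)).map f = f 0 :: (List.range k).map (fun i => f (i+1)) := by
      rw [List.range_succ_eq_map, List.map_cons, List.map_map]
      rfl
    rw [hlist]
    simpa [List.append_assoc] using hk
  -- second recursion: build a set all of whose stems are rejected
  set P : ℕ → ℕ × Finset ℕ → Prop := fun _ p =>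
    ↑p.2 ⊆ Nst ∧ (∀ x ∈ p.2, x ≤ p.1) ∧
    (∀ s, Stem ↑p.2 s → Rejs F (Tail Nst s) s) with hP
  set R : ℕ → ℕ × Finset ℕ → ℕ × Finset ℕ → Prop := fun _ p q =>
    p.1 < q.1 ∧ p.2 ⊆ q.2 ∧ q.1 ∈ Nst ∧ q.1 ∈ q.2 with hR
  have h0 : ∃ p, P 0 p := by
    refine ⟨(0, ∅), by simp, by simp, ?_⟩
    intro s hs
    have : s = [] := by
      cases s with
      | nil => rfl
      | cons a t => exact absurd (hs.2 a (by simp)) (by simp)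
    subst this
    exact hrej.mono ((Set.sep_subset _ _).trans hsub)
  have hstep : ∀ k p, P k p → ∃ q, P (k+1) q ∧ R k p q := by
    rintro k ⟨b, T⟩ ⟨hTsub, hTle, hTrej⟩
    have hbad : (⋃ s ∈ {l : List ℕ | Stem (↑T) l},
        {n ∈ Tail Nst s | ¬ Rejs F (Tail Nst (s++[n])) (s++[n])}).Finite := by
      refine Set.Finite.biUnion (stems_finite T) ?_
      intro s hs
      exact hprop s ⟨hs.1, fun x hx => hTsub (hs.2 x hx)⟩ (hTrej s hs)
    obtain ⟨m, hm⟩ := (hinf.diff (hbad.union (Set.finite_Iic b))).nonempty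
    have hmN : m ∈ Nst := hm.1
    have hmb : b < m := by
      by_contra h
      exact hm.2 (Or.inr (le_of_not_gt h))
    refine ⟨(m, insert m T), ⟨?_, ?_, ?_⟩, hmb, Finset.subset_insert _ _, hmN,
      Finset.mem_insert_self _ _⟩
    · intro x hx
      rcases Finset.mem_insert.1 (by exact_mod_cast hx) with rfl | hx'
      · exact hmN
      · exact hTsub hx'
    · intro x hx
      rcases Finset.mem_insert.1 hx with rfl | hx'
      · exact le_refl _
      · exact (hTle x hx').trans hmb.le
    · intro s hs
      by_cases hmem : m ∈ s
      · obtain ⟨s₁, s₂, rfl⟩ := List.append_of_mem hmem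
        have hpw := hs.1
        rw [List.pairwise_append] at hpw
        have hs₂ : s₂ = [] := by
          cases s₂ with
          | nil => rfl
          | cons a t =>
            exfalso
            have ha : a ∈ insert m T := hs.2 a (by simp)
            have ham : m < a := (List.pairwise_cons.1 hpw.2.1).1 a (by simp)
            rcases Finset.mem_insert.1 ha with rfl | ha'
            · exact lt_irrefl _ ham
            · exact absurd ((hTle a ha').trans hmb.le) (not_le.2 ham)
        subst hs₂
        have hs₁T : ∀ x ∈ s₁, x ∈ T := by
          intro x hx
          have hxm : x < m := hpw.2.2 x hx m (by simp)
          rcases Finset.mem_insert.1 (hs.2 x (by simp [hx])) with rfl | hx'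
          · exact absurd hxm (lt_irrefl _)
          · exact hx'
        have hstem₁ : Stem (↑T) s₁ := ⟨hpw.1, fun x hx => hs₁T x hx⟩
        have hmtail : m ∈ Tail Nst s₁ := ⟨hmN, fun x hx => hpw.2.2 x hx m (by simp)⟩
        have hnotbad : m ∉ ⋃ s ∈ {l : List ℕ | Stem (↑T) l},
            {n ∈ Tail Nst s | ¬ Rejs F (Tail Nst (s++[n])) (s++[n])} :=
          fun h => hm.2 (Or.inl h)
        have : ¬ (m ∈ Tail Nst s₁ ∧ ¬ Rejs F (Tail Nst (s₁++[m])) (s₁++[m])) := by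
          intro h
          exact hnotbad (Set.mem_biUnion hstem₁ ⟨h.1, h.2⟩)
        push_neg at this
        exact this hmtail
      · have hsT : Stem (↑T) s := by
          refine ⟨hs.1, fun x hx => ?_⟩
          rcases Finset.mem_insert.1 (hs.2 x hx) with rfl | hx'
          · exact absurd hx hmem
          · exact hx'
        exact hTrej s hsT
  obtain ⟨g, hPg, hRg⟩ := exists_seq P R h0 hstep
  have hmono : StrictMono (fun k => (g (k+1)).1) := by
    apply strictMono_nat_of_lt_succ
    intro k
    exact (hRg (k+1)).1
  refine ⟨Set.range (fun k => (g (k+1)).1), ?_, ?_, ?_⟩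
  · rintro x ⟨k, rfl⟩
    exact hsub ((hRg k).2.2.1)
  · exact Set.infinite_range_of_injective hmono.injective
  · intro l hl
    have hTmono : ∀ {j k : ℕ}, j ≤ k → (g j).2 ⊆ (g k).2 := by
      intro j k h
      induction h with
      | refl => exact Finset.Subset.refl _
      | step h ih => exact ih.trans (hRg _).2.1
    have hidx : ∃ j, ∀ x ∈ l, x ∈ (g j).2 := by
      have hmem := hl.2
      clear hl
      induction l with
      | nil => exact ⟨0, by simp⟩
      | cons a t ih =>
        obtain ⟨j, hj⟩ := ih (fun x hx => hmem x (List.mem_cons_of_mem a hx))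
        obtain ⟨k, hk⟩ := hmem a (List.mem_cons_self)
        refine ⟨max (k+1) j, ?_⟩
        intro x hx
        rcases List.mem_cons.1 hx with rfl | hx'
        · exact hTmono (le_max_left _ _) (hk ▸ (hRg k).2.2.2)
        · exact hTmono (le_max_right _ _) (hj x hx')
    obtain ⟨j, hj⟩ := hidx
    have hrejl : Rejs F (Tail Nst l) l :=
      (hPg j).2.2 l ⟨hl.1, fun x hx => hj x hx⟩
    intro hF
    exact hrejl (Tail Nst l) (le_refl _) (tail_infinite hinf l) (acpt_of_F hF)

end Ros

namespace Ros

variable {K : Type*}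

def AltOK (A B : ℕ → Set K) (x : K) (l : List ℕ) : Prop :=
  ∀ i (h : i < l.length), if i % 2 = 0 then x ∈ A (l.get ⟨i, h⟩) else x ∈ B (l.get ⟨i, h⟩)

def Indep (A B : ℕ → Set K) (N : Set ℕ) : Prop :=
  ∀ P Q : Finset ℕ, ↑P ⊆ N → ↑Q ⊆ N → Disjoint P Q →
    ∃ x, (∀ n ∈ P, x ∈ A n) ∧ (∀ n ∈ Q, x ∈ B n)

def Conv (A B : ℕ → Set K) (N : Set ℕ) : Prop :=
  ∀ x, {n ∈ N | x ∈ A n}.Finite ∨ {n ∈ N | x ∈ B n}.Finite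

/-- padding lemma, recursive part -/
lemma pad_aux : ∀ (v : List (ℕ × Bool)), (v.map Prod.fst).Pairwise (· < ·) →
    (∀ p ∈ v, p.1 % 2 = 1) → ∀ (pos b : ℕ), (∀ p ∈ v, b + 1 < p.1) →
    ∃ idx : List ℕ, idx.Pairwise (· < ·) ∧ (∀ x ∈ idx, b < x) ∧
      ∀ p ∈ v, ∃ i, ∃ h : i < idx.length,
        idx.get ⟨i, h⟩ = p.1 ∧ ((pos + i) % 2 = 0 ↔ p.2 = true) := by
  intro v
  induction v with
  | nil => exact fun _ _ pos b _ => ⟨[], by simp, by simp, by simp⟩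
  | cons p t ih =>
    rintro hsort hodd pos b hb
    obtain ⟨o, bl⟩ := p
    have hsort' : (t.map Prod.fst).Pairwise (· < ·) := by
      rw [List.map_cons, List.pairwise_cons] at hsort
      exact hsort.2
    have hlt : ∀ q ∈ t, o < q.1 := by
      intro q hq
      rw [List.map_cons, List.pairwise_cons] at hsort
      exact hsort.1 q.1 (List.mem_map_of_mem (f := Prod.fst) hq)
    have hoddo : o % 2 = 1 := hodd (o, bl) (List.mem_cons_self)
    have hb' : ∀ q ∈ t, o + 1 < q.1 := by
      intro q hq
      have h1 := hlt q hq
      have h2 := hodd q (List.mem_cons_of_mem _ hq)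
      omega
    by_cases hpar : (pos % 2 = 0) ↔ (bl = true)
    · obtain ⟨idx, hs, hgt, hget⟩ := ih hsort' (fun q hq => hodd q (List.mem_cons_of_mem _ hq))
        (pos + 1) o hb'
      refine ⟨o :: idx, ?_, ?_, ?_⟩
      · rw [List.pairwise_cons]; exact ⟨hgt, hs⟩
      · intro x hx
        rcases List.mem_cons.1 hx with rfl | hx'
        · have := hb (x, bl) (List.mem_cons_self); omega
        · have h1 := hgt x hx'
          have := hb (o, bl) (List.mem_cons_self); omega
      · intro q hq
        rcases List.mem_cons.1 hq with rfl | hq'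
        · exact ⟨0, by simp, by simpa using hpar⟩
        · obtain ⟨i, hi, h1, h2⟩ := hget q hq'
          refine ⟨i + 1, by simpa using Nat.succ_lt_succ hi, by simpa using h1, ?_⟩
          rw [show pos + (i+1) = pos + 1 + i by ring]
          exact h2
    · obtain ⟨idx, hs, hgt, hget⟩ := ih hsort' (fun q hq => hodd q (List.mem_cons_of_mem _ hq))
        (pos + 2) o hb'
      refine ⟨(o-1) :: o :: idx, ?_, ?_, ?_⟩
      · rw [List.pairwise_cons, List.pairwise_cons]
        refine ⟨?_, hgt, hs⟩
        intro x hx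
        rcases List.mem_cons.1 hx with rfl | hx'
        · omega
        · have := hgt x hx'; omega
      · intro x hx
        have := hb (o, bl) (List.mem_cons_self)
        rcases List.mem_cons.1 hx with rfl | hx'
        · omega
        · rcases List.mem_cons.1 hx' with rfl | hx''
          · omega
          · have := hgt x hx''; omega
      · intro q hq
        rcases List.mem_cons.1 hq with rfl | hq'
        · refine ⟨1, by simp, by simp, ?_⟩
          rcases Bool.eq_false_or_eq_true bl with h | h <;>
            subst h <;> simp at hpar ⊢ <;> omega
        · obtain ⟨i, hi, h1, h2⟩ := hget q hq'
          refine ⟨i + 2, ?_, ?_, ?_⟩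
          · simpa using Nat.succ_lt_succ (Nat.succ_lt_succ hi)
          · simpa using h1
          · rw [show pos + (i+2) = pos + 2 + i by ring]
            exact h2

/-- padding lemma, top level -/
lemma pad (v : List (ℕ × Bool)) (hsort : (v.map Prod.fst).Pairwise (· < ·))
    (hodd : ∀ p ∈ v, p.1 % 2 = 1) :
    ∃ idx : List ℕ, idx.Pairwise (· < ·) ∧
      ∀ p ∈ v, ∃ i, ∃ h : i < idx.length,
        idx.get ⟨i, h⟩ = p.1 ∧ ((i % 2 = 0) ↔ p.2 = true) := by
  cases v with
  | nil => exact ⟨[], by simp, by simp⟩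
  | cons p t =>
    obtain ⟨o, bl⟩ := p
    have hsort' : (t.map Prod.fst).Pairwise (· < ·) := by
      rw [List.map_cons, List.pairwise_cons] at hsort
      exact hsort.2
    have hoddt : ∀ q ∈ t, q.1 % 2 = 1 := fun q hq => hodd q (List.mem_cons_of_mem _ hq)
    have hoddo : o % 2 = 1 := hodd (o, bl) (List.mem_cons_self)
    have hb' : ∀ q ∈ t, o + 1 < q.1 := by
      intro q hq
      rw [List.map_cons, List.pairwise_cons] at hsort
      have h1 := hsort.1 q.1 (List.mem_map_of_mem (f := Prod.fst) hq)
      have h2 := hoddt q hq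
      omega
    by_cases hpar : bl = true
    · obtain ⟨idx, hs, hgt, hget⟩ := pad_aux t hsort' hoddt 1 o hb'
      refine ⟨o :: idx, ?_, ?_⟩
      · rw [List.pairwise_cons]; exact ⟨hgt, hs⟩
      · intro q hq
        rcases List.mem_cons.1 hq with rfl | hq'
        · exact ⟨0, by simp, by simp, by simp [hpar]⟩
        · obtain ⟨i, hi, h1, h2⟩ := hget q hq'
          refine ⟨i + 1, by simpa using Nat.succ_lt_succ hi, by simpa using h1, ?_⟩
          rw [show (1:ℕ) + i = i + 1 by ring] at h2
          exact h2
    · obtain ⟨idx, hs, hgt, hget⟩ := pad_aux t hsort' hoddt 2 o hb'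
      refine ⟨(o-1) :: o :: idx, ?_, ?_⟩
      · rw [List.pairwise_cons, List.pairwise_cons]
        refine ⟨?_, hgt, hs⟩
        intro x hx
        rcases List.mem_cons.1 hx with rfl | hx'
        · omega
        · have := hgt x hx'; omega
      · intro q hq
        rcases List.mem_cons.1 hq with rfl | hq'
        · refine ⟨1, by simp, by simp, by simp [hpar]⟩
        · obtain ⟨i, hi, h1, h2⟩ := hget q hq'
          refine ⟨i + 2, ?_, ?_, ?_⟩
          · simpa using Nat.succ_lt_succ (Nat.succ_lt_succ hi)
          · simpa using h1
          · rw [show (2:ℕ) + i = i + 2 by ring] at h2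
            exact h2

theorem pairs_dichotomy (A B : ℕ → Set K) {M : Set ℕ} (hM : M.Infinite) :
    (∃ N, N ⊆ M ∧ N.Infinite ∧ Indep A B N) ∨
    (∃ N, N ⊆ M ∧ N.Infinite ∧ Conv A B N) := by
  classical
  set F : List ℕ → Prop := fun l => ¬ ∃ x, AltOK A B x l with hF
  rcases galvin F hM with ⟨N, h1, h2, h3⟩ | ⟨N, h1, h2, h3⟩
  · right
    refine ⟨N, h1, h2, ?_⟩
    intro x
    by_contra hcon
    push_neg at hcon
    have hIA : {n ∈ N | x ∈ A n}.Infinite := hcon.1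
    have hIB : {n ∈ N | x ∈ B n}.Infinite := hcon.2
    have hseq : ∃ f : ℕ → ℕ,
        (∀ k, f k ∈ (if k % 2 = 0 then {n ∈ N | x ∈ A n} else {n ∈ N | x ∈ B n})) ∧
        ∀ k, f k < f (k+1) := by
      have hz : ∃ a, a ∈ (if 0 % 2 = 0 then {n ∈ N | x ∈ A n} else {n ∈ N | x ∈ B n}) := by
        obtain ⟨m, hm⟩ := hIA.nonempty
        exact ⟨m, by simpa using hm⟩
      have hst : ∀ k a, a ∈ (if k % 2 = 0 then {n ∈ N | x ∈ A n} else {n ∈ N | x ∈ B n}) →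
          ∃ b, b ∈ (if (k+1) % 2 = 0 then {n ∈ N | x ∈ A n} else {n ∈ N | x ∈ B n}) ∧
          a < b := by
        intro k a _
        by_cases h : (k+1) % 2 = 0
        · obtain ⟨v, hv, hav⟩ := hIA.exists_gt a
          exact ⟨v, by simp [h, hv], hav⟩
        · obtain ⟨v, hv, hav⟩ := hIB.exists_gt a
          exact ⟨v, by simp [h, hv], hav⟩
      obtain ⟨g, hg1, hg2⟩ := exists_seq (α := ℕ)
        (fun k v => v ∈ (if k % 2 = 0 then {n ∈ N | x ∈ A n} else {n ∈ N | x ∈ B n}))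
        (fun _ a b => a < b) hz (fun k a ha => hst k a ha)
      exact ⟨g, hg1, hg2⟩
    obtain ⟨f, hf1, hf2⟩ := hseq
    have hfm : StrictMono f := strictMono_nat_of_lt_succ hf2
    have hfN : ∀ i, f i ∈ N := by
      intro i
      have h := hf1 i
      by_cases hc : i % 2 = 0
      · rw [if_pos hc] at h; exact h.1
      · rw [if_neg hc] at h; exact h.1
    obtain ⟨k, hk⟩ := h3 f hfm hfN
    simp only [List.nil_append] at hk
    refine hk ⟨x, ?_⟩
    intro i hi
    have hlen : i < k := by simpa using hi
    have hget : ((List.range k).map f).get ⟨i, hi⟩ = f i := by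
      simp
    rw [hget]
    have h := hf1 i
    by_cases hc : i % 2 = 0
    · rw [if_pos hc] at h ⊢; exact h.2
    · rw [if_neg hc] at h ⊢; exact h.2
  · left
    haveI : Infinite ↥N := Set.infinite_coe_iff.2 h2
    set e : ℕ → ℕ := fun k => ((Nat.Subtype.orderIsoOfNat N k : ↥N) : ℕ) with he_def
    have he : StrictMono e := fun a b h =>
      Subtype.coe_lt_coe.2 ((Nat.Subtype.orderIsoOfNat N).strictMono h)
    have heN : ∀ k, e k ∈ N := fun k => (Nat.Subtype.orderIsoOfNat N k).2
    refine ⟨e '' {k | k % 2 = 1}, ?_, ?_, ?_⟩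
    · rintro y ⟨k, _, rfl⟩
      exact h1 (heN k)
    · refine Set.infinite_of_injective_forall_mem (f := fun k : ℕ => e (2*k+1)) ?_ ?_
      · intro a b hab
        have := he.injective hab
        omega
      · intro k
        exact ⟨2*k+1, show (2*k+1) % 2 = 1 by omega, rfl⟩
    · intro P Q hP hQ hdisj
      set Podd : Finset ℕ := P.preimage e (he.injective.injOn) with hPodd
      set Qodd : Finset ℕ := Q.preimage e (he.injective.injOn) with hQodd
      have hPmem : ∀ j, j ∈ Podd ↔ e j ∈ P := fun j => Finset.mem_preimage
      have hQmem : ∀ j, j ∈ Qodd ↔ e j ∈ Q := fun j => Finset.mem_preimage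
      have hPcover : ∀ n ∈ P, ∃ j, j % 2 = 1 ∧ e j = n ∧ j ∈ Podd := by
        intro n hn
        obtain ⟨j, hj, rfl⟩ := hP hn
        exact ⟨j, hj, rfl, (hPmem j).2 hn⟩
      have hQcover : ∀ n ∈ Q, ∃ j, j % 2 = 1 ∧ e j = n ∧ j ∈ Qodd := by
        intro n hn
        obtain ⟨j, hj, rfl⟩ := hQ hn
        exact ⟨j, hj, rfl, (hQmem j).2 hn⟩
      have hoddP : ∀ j ∈ Podd, j % 2 = 1 := by
        intro j hj
        obtain ⟨j', hj', hej, _⟩ := hPcover (e j) ((hPmem j).1 hj)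
        rwa [he.injective hej] at hj'
      have hoddQ : ∀ j ∈ Qodd, j % 2 = 1 := by
        intro j hj
        obtain ⟨j', hj', hej, _⟩ := hQcover (e j) ((hQmem j).1 hj)
        rwa [he.injective hej] at hj'
      set U : Finset ℕ := Podd ∪ Qodd with hU
      set v : List (ℕ × Bool) := (U.sort (· ≤ ·)).map (fun j => (j, decide (j ∈ Podd)))
        with hv
      have hsortv : (v.map Prod.fst).Pairwise (· < ·) := by
        rw [hv, List.map_map]
        have : (Prod.fst ∘ fun j => (j, decide (j ∈ Podd))) = id := rfl
        rw [this, List.map_id]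
        exact (Finset.sortedLT_sort _).pairwise
      have hoddv : ∀ p ∈ v, p.1 % 2 = 1 := by
        intro p hp
        rw [hv, List.mem_map] at hp
        obtain ⟨j, hj, rfl⟩ := hp
        have hjU : j ∈ U := (Finset.mem_sort _).1 hj
        rcases Finset.mem_union.1 hjU with h | h
        · exact hoddP j h
        · exact hoddQ j h
      obtain ⟨idx, hsidx, hget⟩ := pad v hsortv hoddv
      have hstem : Stem N (idx.map e) := by
        constructor
        · rw [List.pairwise_map]
          exact hsidx.imp (fun h => he h)
        · intro y hy
          rw [List.mem_map] at hy
          obtain ⟨j, _, rfl⟩ := hy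
          exact heN j
      have hnF := h3 _ hstem
      rw [hF] at hnF
      obtain ⟨x, hx⟩ := not_not.1 hnF
      refine ⟨x, ?_, ?_⟩
      · intro n hn
        obtain ⟨j, hjodd, rfl, hjP⟩ := hPcover n hn
        have hjv : (j, true) ∈ v := by
          rw [hv, List.mem_map]
          exact ⟨j, (Finset.mem_sort _).2 (Finset.mem_union_left _ hjP), by simp [hjP]⟩
        obtain ⟨i, hi, hgeti, hpar⟩ := hget (j, true) hjv
        have hil : i < (idx.map e).length := by simpa using hi
        have hone := hx i hil
        have hev : i % 2 = 0 := hpar.2 rfl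
        rw [if_pos hev] at hone
        have hEq : (idx.map e).get ⟨i, hil⟩ = e j := by
          rw [List.get_eq_getElem, List.getElem_map]
          have hgeti' : idx[i] = j := by simpa [List.get_eq_getElem] using hgeti
          rw [hgeti']
        rwa [hEq] at hone
      · intro n hn
        obtain ⟨j, hjodd, rfl, hjQ⟩ := hQcover n hn
        have hjnP : j ∉ Podd := by
          intro hjP
          exact Finset.disjoint_left.1 hdisj ((hPmem j).1 hjP) ((hQmem j).1 hjQ)
        have hjv : (j, false) ∈ v := by
          rw [hv, List.mem_map]
          exact ⟨j, (Finset.mem_sort _).2 (Finset.mem_union_right _ hjQ), by simp [hjnP]⟩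
        obtain ⟨i, hi, hgeti, hpar⟩ := hget (j, false) hjv
        have hil : i < (idx.map e).length := by simpa using hi
        have hone := hx i hil
        have hodd : ¬ (i % 2 = 0) := fun h => by simpa using hpar.1 h
        rw [if_neg hodd] at hone
        have hEq : (idx.map e).get ⟨i, hil⟩ = e j := by
          rw [List.get_eq_getElem, List.getElem_map]
          have hgeti' : idx[i] = j := by simpa [List.get_eq_getElem] using hgeti
          rw [hgeti']
        rwa [hEq] at hone

end Ros

namespace Ros

lemma exists_separated {α : Type*} [PseudoMetricSpace α] {s : Set α}
    (h : ¬ TotallyBounded s) :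
    ∃ ε > (0:ℝ), ∃ y : ℕ → α, (∀ k, y k ∈ s) ∧ ∀ j k, j < k → ε ≤ dist (y j) (y k) := by
  rw [Metric.totallyBounded_iff] at h
  push_neg at h
  obtain ⟨ε, hε, hcov⟩ := h
  have hstep : ∀ (l : List α), (∀ y ∈ l, y ∈ s) → ∃ a ∈ s, ∀ y ∈ l, ε ≤ dist a y := by
    intro l _
    have := hcov {y | y ∈ l} l.finite_toSet
    rw [Set.not_subset] at this
    obtain ⟨a, ha, hna⟩ := this
    refine ⟨a, ha, ?_⟩
    intro y hy
    by_contra hlt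
    exact hna (Set.mem_biUnion hy (by simpa [Metric.mem_ball, dist_comm] using lt_of_not_ge hlt))
  obtain ⟨g, hg1, hg2⟩ := exists_seq (α := List α)
    (fun _ l => ∀ y ∈ l, y ∈ s)
    (fun _ l l' => ∃ a ∈ s, l' = a :: l ∧ ∀ y ∈ l, ε ≤ dist a y)
    ⟨[], by simp⟩
    (by
      intro k l hl
      obtain ⟨a, ha, hd⟩ := hstep l hl
      refine ⟨a :: l, ?_, a, ha, rfl, hd⟩
      intro y hy
      rcases List.mem_cons.1 hy with rfl | hy'
      · exact ha
      · exact hl y hy')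
  choose a hamem haeq had using hg2
  refine ⟨ε, hε, a, fun k => hamem k, ?_⟩
  have hmem_later : ∀ j k, j < k → a j ∈ g k := by
    intro j k hjk
    induction k with
    | zero => omega
    | succ k ih =>
      rw [haeq k]
      rcases Nat.lt_succ_iff_lt_or_eq.1 hjk with h | h
      · exact List.mem_cons_of_mem _ (ih h)
      · subst h; exact List.mem_cons_self
  intro j k hjk
  rw [dist_comm]
  exact had k (a j) (hmem_later j k hjk)

end Ros

open Ros

/-- If `E` contains no isomorphic copy of `ℓ¹` and `S : E → F` is completely continuous
(weakly null sequences are mapped to norm null sequences), then `S` is a compact operator. -/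
theorem stmt10 {E F : Type*}
    [NormedAddCommGroup E] [NormedSpace ℝ E] [CompleteSpace E]
    [NormedAddCommGroup F] [NormedSpace ℝ F] [CompleteSpace F]
    (hE : ¬ ∃ (J : lp (fun _ : ℕ => ℝ) 1 →L[ℝ] E) (c : ℝ), 0 < c ∧
      ∀ v : lp (fun _ : ℕ => ℝ) 1, c * ‖v‖ ≤ ‖J v‖)
    (S : E →L[ℝ] F)
    (hS : ∀ e : ℕ → E,
      (∀ φ : E →L[ℝ] ℝ, Tendsto (fun n => φ (e n)) atTop (𝓝 0)) →
      Tendsto (fun n => ‖S (e n)‖) atTop (𝓝 0)) :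
    IsCompact (closure (S '' closedBall 0 1)) := by
  classical
  by_contra hcomp
  have h1 : ¬ TotallyBounded (S '' closedBall 0 1) := by
    intro h
    exact hcomp (isCompact_iff_totallyBounded_isComplete.2
      ⟨h.closure, isClosed_closure.isComplete⟩)
  obtain ⟨ε, hε, y, hy_mem, hy_sep⟩ := exists_separated h1
  choose xseq hx_ball hx_eq using hy_mem
  have hx_norm : ∀ k, ‖xseq k‖ ≤ 1 := by
    intro k
    have := hx_ball k
    rwa [Metric.mem_closedBall, dist_zero_right] at this
  set Aset : ℚ → ℕ → Set (E →L[ℝ] ℝ) :=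
    fun q n => {φ | ‖φ‖ ≤ 1 ∧ φ (xseq n) ≤ (q:ℝ)} with hAset
  set Bset : ℚ → ℕ → Set (E →L[ℝ] ℝ) :=
    fun r n => {φ | ‖φ‖ ≤ 1 ∧ (r:ℝ) ≤ φ (xseq n)} with hBset
  by_cases hind : ∃ q r : ℚ, (q:ℝ) < (r:ℝ) ∧
      ∃ N : Set ℕ, N.Infinite ∧ Indep (Aset q) (Bset r) N
  · -- ℓ¹ branch
    obtain ⟨q, r, hqr, N, hNinf, hNind⟩ := hind
    haveI : Infinite ↥N := Set.infinite_coe_iff.2 hNinf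
    set g : ℕ → ℕ := fun k => ((Nat.Subtype.orderIsoOfNat N k : ↥N) : ℕ) with hg_def
    have hgmono : StrictMono g := fun a b h =>
      Subtype.coe_lt_coe.2 ((Nat.Subtype.orderIsoOfNat N).strictMono h)
    have hgN : ∀ k, g k ∈ N := fun k => (Nat.Subtype.orderIsoOfNat N k).2
    set z : ℕ → E := fun k => xseq (g k) with hz_def
    have hz_norm : ∀ k, ‖z k‖ ≤ 1 := fun k => hx_norm (g k)
    set δ : ℝ := ((r:ℝ) - q)/2 with hδ_def
    have hδ : 0 < δ := by rw [hδ_def]; linarith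
    have key : ∀ (a : ℕ → ℝ) (T : Finset ℕ),
        δ * (∑ k ∈ T, |a k|) ≤ ‖∑ k ∈ T, a k • z k‖ := by
      intro a T
      rcases T.eq_empty_or_nonempty with rfl | ⟨k₀, hk₀⟩
      · simp
      set Tp : Finset ℕ := T.filter (fun k => 0 ≤ a k) with hTp
      set Tn : Finset ℕ := T.filter (fun k => ¬ 0 ≤ a k) with hTn
      set P : Finset ℕ := Tn.image g with hPdef
      set Q : Finset ℕ := Tp.image g with hQdef
      have hPN : ↑P ⊆ N := by
        rintro n hn
        obtain ⟨k, _, rfl⟩ := Finset.mem_image.1 hn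
        exact hgN k
      have hQN : ↑Q ⊆ N := by
        rintro n hn
        obtain ⟨k, _, rfl⟩ := Finset.mem_image.1 hn
        exact hgN k
      have hdisjTpTn : Disjoint Tn Tp := by
        rw [Finset.disjoint_left]
        intro k hk hk'
        exact (Finset.mem_filter.1 hk).2 (Finset.mem_filter.1 hk').2
      have hdisj : Disjoint P Q :=
        (Finset.disjoint_image hgmono.injective).2 hdisjTpTn
      obtain ⟨φ, hφA, hφB⟩ := hNind P Q hPN hQN hdisj
      obtain ⟨ψ, hψA, hψB⟩ := hNind Q P hQN hPN hdisj.symm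
      -- facts about φ, ψ on z k
      have hφz_neg : ∀ k ∈ Tn, φ (z k) ≤ (q:ℝ) := by
        intro k hk
        exact (hφA (g k) (Finset.mem_image_of_mem g hk)).2
      have hφz_pos : ∀ k ∈ Tp, (r:ℝ) ≤ φ (z k) := by
        intro k hk
        exact (hφB (g k) (Finset.mem_image_of_mem g hk)).2
      have hψz_pos : ∀ k ∈ Tp, ψ (z k) ≤ (q:ℝ) := by
        intro k hk
        exact (hψA (g k) (Finset.mem_image_of_mem g hk)).2
      have hψz_neg : ∀ k ∈ Tn, (r:ℝ) ≤ ψ (z k) := by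
        intro k hk
        exact (hψB (g k) (Finset.mem_image_of_mem g hk)).2
      have hφnorm : ‖φ‖ ≤ 1 := by
        by_cases hc : 0 ≤ a k₀
        · exact (hφB (g k₀) (Finset.mem_image_of_mem g (Finset.mem_filter.2 ⟨hk₀, hc⟩))).1
        · exact (hφA (g k₀) (Finset.mem_image_of_mem g (Finset.mem_filter.2 ⟨hk₀, hc⟩))).1
      have hψnorm : ‖ψ‖ ≤ 1 := by
        by_cases hc : 0 ≤ a k₀
        · exact (hψA (g k₀) (Finset.mem_image_of_mem g (Finset.mem_filter.2 ⟨hk₀, hc⟩))).1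
        · exact (hψB (g k₀) (Finset.mem_image_of_mem g (Finset.mem_filter.2 ⟨hk₀, hc⟩))).1
      set x : E := ∑ k ∈ T, a k • z k with hx_def
      set t : ℝ := ∑ k ∈ Tp, |a k| with ht_def
      set u : ℝ := ∑ k ∈ Tn, |a k| with hu_def
      have hsplit : ∑ k ∈ T, |a k| = t + u := by
        rw [ht_def, hu_def, Finset.sum_filter_add_sum_filter_not]
      have hφsum : φ x = ∑ k ∈ T, a k * φ (z k) := by
        rw [hx_def, map_sum]
        congr 1
        ext k
        rw [map_smul, smul_eq_mul]
      have hψsum : ψ x = ∑ k ∈ T, a k * ψ (z k) := by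
        rw [hx_def, map_sum]
        congr 1
        ext k
        rw [map_smul, smul_eq_mul]
      have hφlow : (r:ℝ) * t - (q:ℝ) * u ≤ φ x := by
        rw [hφsum, ← Finset.sum_filter_add_sum_filter_not T (fun k => 0 ≤ a k)
          (fun k => a k * φ (z k))]
        have h1 : (r:ℝ) * t ≤ ∑ k ∈ Tp, a k * φ (z k) := by
          rw [ht_def, Finset.mul_sum]
          refine Finset.sum_le_sum ?_
          intro k hk
          have h0 : 0 ≤ a k := (Finset.mem_filter.1 hk).2
          rw [abs_of_nonneg h0]
          calc (r:ℝ) * a k = a k * r := by ring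
          _ ≤ a k * φ (z k) := mul_le_mul_of_nonneg_left (hφz_pos k hk) h0
        have h2 : -((q:ℝ) * u) ≤ ∑ k ∈ Tn, a k * φ (z k) := by
          rw [hu_def, Finset.mul_sum, ← Finset.sum_neg_distrib]
          refine Finset.sum_le_sum ?_
          intro k hk
          have h0 : a k < 0 := lt_of_not_ge (Finset.mem_filter.1 hk).2
          rw [abs_of_neg h0]
          have : a k * q ≤ a k * φ (z k) :=
            mul_le_mul_of_nonpos_left (hφz_neg k hk) h0.le
          nlinarith [this]
        linarith
      have hψhigh : ψ x ≤ (q:ℝ) * t - (r:ℝ) * u := by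
        rw [hψsum, ← Finset.sum_filter_add_sum_filter_not T (fun k => 0 ≤ a k)
          (fun k => a k * ψ (z k))]
        have h1 : ∑ k ∈ Tp, a k * ψ (z k) ≤ (q:ℝ) * t := by
          rw [ht_def, Finset.mul_sum]
          refine Finset.sum_le_sum ?_
          intro k hk
          have h0 : 0 ≤ a k := (Finset.mem_filter.1 hk).2
          rw [abs_of_nonneg h0]
          calc a k * ψ (z k) ≤ a k * q := mul_le_mul_of_nonneg_left (hψz_pos k hk) h0
          _ = q * a k := by ring
        have h2 : ∑ k ∈ Tn, a k * ψ (z k) ≤ -((r:ℝ) * u) := by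
          rw [hu_def, Finset.mul_sum, ← Finset.sum_neg_distrib]
          refine Finset.sum_le_sum ?_
          intro k hk
          have h0 : a k < 0 := lt_of_not_ge (Finset.mem_filter.1 hk).2
          rw [abs_of_neg h0]
          have : a k * ψ (z k) ≤ a k * r :=
            mul_le_mul_of_nonpos_left (hψz_neg k hk) h0.le
          nlinarith [this]
        linarith
      have hφbound : φ x ≤ ‖x‖ := by
        calc φ x ≤ |φ x| := le_abs_self _
        _ = ‖φ x‖ := (Real.norm_eq_abs _).symm
        _ ≤ ‖φ‖ * ‖x‖ := φ.le_opNorm x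
        _ ≤ 1 * ‖x‖ := mul_le_mul_of_nonneg_right hφnorm (norm_nonneg x)
        _ = ‖x‖ := one_mul _
      have hψbound : -ψ x ≤ ‖x‖ := by
        calc -ψ x ≤ |ψ x| := neg_le_abs _
        _ = ‖ψ x‖ := (Real.norm_eq_abs _).symm
        _ ≤ ‖ψ‖ * ‖x‖ := ψ.le_opNorm x
        _ ≤ 1 * ‖x‖ := mul_le_mul_of_nonneg_right hψnorm (norm_nonneg x)
        _ = ‖x‖ := one_mul _
      rw [hsplit]
      rw [hδ_def]
      nlinarith [hφlow, hψhigh, hφbound, hψbound]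
    -- build the embedding J : ℓ¹ → E
    have habs_sum : ∀ v : lp (fun _ : ℕ => ℝ) 1, Summable (fun k => ‖v k‖) := by
      intro v
      have hm : Memℓp (⇑v) 1 := lp.memℓp v
      have := hm.summable (by norm_num : (0:ℝ) < (1:ENNReal).toReal)
      simpa using this
    have hns : ∀ v : lp (fun _ : ℕ => ℝ) 1, Summable (fun k => ‖v k • z k‖) := by
      intro v
      refine Summable.of_nonneg_of_le (fun k => norm_nonneg _) ?_ (habs_sum v)
      intro k
      rw [norm_smul]
      calc ‖v k‖ * ‖z k‖ ≤ ‖v k‖ * 1 :=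
        mul_le_mul_of_nonneg_left (hz_norm k) (norm_nonneg _)
      _ = ‖v k‖ := mul_one _
    have hsummable : ∀ v : lp (fun _ : ℕ => ℝ) 1, Summable (fun k => v k • z k) :=
      fun v => Summable.of_norm (hns v)
    have hnorm_v : ∀ v : lp (fun _ : ℕ => ℝ) 1, ‖v‖ = ∑' k, ‖v k‖ := by
      intro v
      rw [lp.norm_eq_tsum_rpow (by norm_num) v]
      simp
    set Jlin : lp (fun _ : ℕ => ℝ) 1 →ₗ[ℝ] E :=
      { toFun := fun v => ∑' k, v k • z k
        map_add' := by
          intro v w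
          have h1 := hsummable v
          have h2 := hsummable w
          rw [← Summable.tsum_add h1 h2]
          refine tsum_congr (fun k => ?_)
          have : (↑(v + w) : ℕ → ℝ) k = v k + w k := by
            rw [lp.coeFn_add]; rfl
          rw [this, add_smul]
        map_smul' := by
          intro c v
          have h1 := (hsummable v).hasSum
          have h2 := h1.const_smul c
          rw [RingHom.id_apply, ← h2.tsum_eq]
          refine tsum_congr (fun k => ?_)
          have : (↑(c • v) : ℕ → ℝ) k = c * v k := by
            rw [lp.coeFn_smul]; rfl
          rw [this, mul_smul] } with hJlin
    have hJbound : ∀ v : lp (fun _ : ℕ => ℝ) 1, ‖Jlin v‖ ≤ 1 * ‖v‖ := by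
      intro v
      rw [one_mul, hnorm_v v]
      refine (norm_tsum_le_tsum_norm (hns v)).trans ?_
      · refine Summable.tsum_le_tsum ?_ (hns v) (habs_sum v)
        intro k
        rw [norm_smul]
        calc ‖v k‖ * ‖z k‖ ≤ ‖v k‖ * 1 :=
          mul_le_mul_of_nonneg_left (hz_norm k) (norm_nonneg _)
        _ = ‖v k‖ := mul_one _
    set J : lp (fun _ : ℕ => ℝ) 1 →L[ℝ] E := Jlin.mkContinuous 1 hJbound with hJ
    refine hE ⟨J, δ, hδ, ?_⟩
    intro v
    have hhs : HasSum (fun k => v k • z k) (J v) := (hsummable v).hasSum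
    have hhn : HasSum (fun k => ‖v k‖) ‖v‖ := by
      have := (habs_sum v).hasSum
      rwa [← hnorm_v v] at this
    have hT1 : Tendsto (fun T : Finset ℕ => δ * ∑ k ∈ T, ‖v k‖) atTop (𝓝 (δ * ‖v‖)) :=
      hhn.const_mul δ
    have hT2 : Tendsto (fun T : Finset ℕ => ‖∑ k ∈ T, v k • z k‖) atTop (𝓝 ‖J v‖) :=
      hhs.norm
    refine le_of_tendsto_of_tendsto' hT1 hT2 ?_
    intro T
    have := key (fun k => v k) T
    simpa [Real.norm_eq_abs] using this
  · -- weakly Cauchy branch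
    push_neg at hind
    have hconv_mono : ∀ (q r : ℚ) (N N' : Set ℕ), N' ⊆ N →
        Conv (Aset q) (Bset r) N → Conv (Aset q) (Bset r) N' := by
      intro q r N N' hsub hc ψ
      rcases hc ψ with h | h
      · exact Or.inl (h.subset (fun n hn => ⟨hsub hn.1, hn.2⟩))
      · exact Or.inr (h.subset (fun n hn => ⟨hsub hn.1, hn.2⟩))
    have hconv : ∀ p : ℚ × ℚ, ∀ M : Set ℕ, M.Infinite → ∃ N, N ⊆ M ∧ N.Infinite ∧
        (((p.1:ℝ) < (p.2:ℝ)) → Conv (Aset p.1) (Bset p.2) N) := by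
      rintro ⟨q, r⟩ M hM
      by_cases hqr : (q:ℝ) < (r:ℝ)
      · rcases pairs_dichotomy (Aset q) (Bset r) hM with ⟨N, h1', h2', h3'⟩ | ⟨N, h1', h2', h3'⟩
        · exact absurd h3' (hind q r hqr N h2')
        · exact ⟨N, h1', h2', fun _ => h3'⟩
      · exact ⟨M, le_refl _, hM, fun h => absurd h hqr⟩
    obtain ⟨qe, hqe⟩ := exists_surjective_nat (ℚ × ℚ)
    obtain ⟨G, hG1, hG2⟩ := exists_seq (α := Set ℕ)
      (fun k N => N.Infinite ∧ ∀ j, j < k → (((qe j).1:ℝ) < ((qe j).2:ℝ)) →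
        Conv (Aset (qe j).1) (Bset (qe j).2) N)
      (fun _ N N' => N' ⊆ N)
      ⟨Set.univ, Set.infinite_univ, by omega⟩
      (by
        rintro k N ⟨hNinf, hNc⟩
        obtain ⟨N', h1', h2', h3'⟩ := hconv (qe k) N hNinf
        refine ⟨N', ⟨h2', ?_⟩, h1'⟩
        intro j hj hlt
        rcases Nat.lt_succ_iff_lt_or_eq.1 hj with h | h
        · exact hconv_mono _ _ _ _ h1' (hNc j h hlt)
        · subst h
          exact h3' hlt)
    obtain ⟨d, hd1, hd2⟩ := exists_seq (α := ℕ) (fun k n => n ∈ G k) (fun _ a b => a < b)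
      (hG1 0).1.nonempty
      (by
        intro k a _
        obtain ⟨b, hb, hab⟩ := (hG1 (k+1)).1.exists_gt a
        exact ⟨b, hb, hab⟩)
    have hdmono : StrictMono d := strictMono_nat_of_lt_succ hd2
    have hGmono : ∀ {j k : ℕ}, j ≤ k → G k ⊆ G j := by
      intro j k h
      induction h with
      | refl => exact le_refl _
      | step h ih => exact (hG2 _).trans ih
    have hcau1 : ∀ ψ : E →L[ℝ] ℝ, ‖ψ‖ ≤ 1 → CauchySeq (fun k => ψ (xseq (d k))) := by
      intro ψ hψ
      set u : ℕ → ℝ := fun k => ψ (xseq (d k)) with hu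
      have hub : ∀ k, |u k| ≤ 1 := by
        intro k
        calc |u k| = ‖ψ (xseq (d k))‖ := (Real.norm_eq_abs _).symm
        _ ≤ ‖ψ‖ * ‖xseq (d k)‖ := ψ.le_opNorm _
        _ ≤ 1 * 1 := mul_le_mul hψ (hx_norm _) (norm_nonneg _) zero_le_one
        _ = 1 := one_mul _
      have hbddA : Filter.IsBoundedUnder (· ≤ ·) atTop u :=
        Filter.isBoundedUnder_of ⟨1, fun k => (le_abs_self _).trans (hub k)⟩
      have hbddB : Filter.IsBoundedUnder (· ≥ ·) atTop u :=
        Filter.isBoundedUnder_of ⟨-1, fun k => (neg_le_neg (hub k)).trans (neg_abs_le _)⟩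
      by_contra hnc
      have hliml : Filter.liminf u atTop < Filter.limsup u atTop := by
        rcases lt_or_eq_of_le (Filter.liminf_le_limsup hbddA hbddB) with h | h
        · exact h
        · exact absurd ((tendsto_of_liminf_eq_limsup h rfl hbddA hbddB).cauchySeq) hnc
      obtain ⟨q, hq1, hq2⟩ := exists_rat_btwn hliml
      obtain ⟨r, hr1, hr2⟩ := exists_rat_btwn hq2
      have hfreqA : ∃ᶠ k in atTop, u k < (q:ℝ) :=
        Filter.frequently_lt_of_liminf_lt hbddA.isCoboundedUnder_ge hq1
      have hfreqB : ∃ᶠ k in atTop, (r:ℝ) < u k :=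
        Filter.frequently_lt_of_lt_limsup hbddB.isCoboundedUnder_le hr2
      obtain ⟨j, hj⟩ := hqe (q, r)
      have hconvj : Conv (Aset q) (Bset r) (G (j+1)) := by
        have h := (hG1 (j+1)).2 j (Nat.lt_succ_self j)
        rw [hj] at h
        exact h (by simpa using hr1)
      have hdin : ∀ k, j + 1 ≤ k → d k ∈ G (j+1) := fun k hk => hGmono hk (hd1 k)
      rcases hconvj ψ with hfin | hfin
      · have hinfK : {k | u k < (q:ℝ)}.Infinite :=
          Nat.frequently_atTop_iff_infinite.1 hfreqA
        have hinfK' : ({k | u k < (q:ℝ)} \ Set.Iio (j+1)).Infinite :=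
          hinfK.diff (Set.finite_Iio _)
        have himg : (d '' ({k | u k < (q:ℝ)} \ Set.Iio (j+1))).Infinite :=
          hinfK'.image (hdmono.injective.injOn)
        have hsub : d '' ({k | u k < (q:ℝ)} \ Set.Iio (j+1)) ⊆
            {n ∈ G (j+1) | ψ ∈ Aset q n} := by
          rintro n ⟨k, ⟨hk1, hk2⟩, rfl⟩
          exact ⟨hdin k (le_of_not_gt (by simpa using hk2)), hψ, le_of_lt hk1⟩
        exact (himg.mono hsub) hfin
      · have hinfK : {k | (r:ℝ) < u k}.Infinite :=
          Nat.frequently_atTop_iff_infinite.1 hfreqB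
        have hinfK' : ({k | (r:ℝ) < u k} \ Set.Iio (j+1)).Infinite :=
          hinfK.diff (Set.finite_Iio _)
        have himg : (d '' ({k | (r:ℝ) < u k} \ Set.Iio (j+1))).Infinite :=
          hinfK'.image (hdmono.injective.injOn)
        have hsub : d '' ({k | (r:ℝ) < u k} \ Set.Iio (j+1)) ⊆
            {n ∈ G (j+1) | ψ ∈ Bset r n} := by
          rintro n ⟨k, ⟨hk1, hk2⟩, rfl⟩
          exact ⟨hdin k (le_of_not_gt (by simpa using hk2)), hψ, le_of_lt hk1⟩
        exact (himg.mono hsub) hfin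
    have hcau : ∀ φ : E →L[ℝ] ℝ,
        Tendsto (fun k => φ (xseq (d (k+1))) - φ (xseq (d k))) atTop (𝓝 0) := by
      intro φ
      set c : ℝ := max ‖φ‖ 1 with hc
      have hc1 : 0 < c := lt_of_lt_of_le zero_lt_one (le_max_right _ _)
      set ψ : E →L[ℝ] ℝ := c⁻¹ • φ with hψdef
      have hψn : ‖ψ‖ ≤ 1 := by
        refine ContinuousLinearMap.opNorm_le_bound _ zero_le_one ?_
        intro v
        have h7 : ψ v = c⁻¹ * φ v := by
          rw [hψdef]
          simp [smul_eq_mul]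
        rw [h7, one_mul, Real.norm_eq_abs, abs_mul, abs_of_pos (inv_pos.2 hc1)]
        have h8 : |φ v| ≤ c * ‖v‖ := by
          rw [← Real.norm_eq_abs]
          exact (φ.le_opNorm v).trans
            (mul_le_mul_of_nonneg_right (le_max_left _ _) (norm_nonneg _))
        calc c⁻¹ * |φ v| ≤ c⁻¹ * (c * ‖v‖) :=
          mul_le_mul_of_nonneg_left h8 (inv_pos.2 hc1).le
        _ = ‖v‖ := by field_simp
      have hcψ := hcau1 ψ hψn
      obtain ⟨L, hL⟩ := cauchySeq_tendsto_of_complete hcψ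
      have hφeq : ∀ v : E, φ v = c * ψ v := by
        intro v
        rw [hψdef]
        simp only [ContinuousLinearMap.smul_apply, smul_eq_mul]
        field_simp
      have hφt : Tendsto (fun k => φ (xseq (d k))) atTop (𝓝 (c * L)) := by
        have h2 := hL.const_mul c
        have h3 : (fun k => c * ψ (xseq (d k))) = (fun k => φ (xseq (d k))) := by
          funext k
          rw [hφeq]
        rwa [h3] at h2
      have h2 : Tendsto (fun k => φ (xseq (d (k+1)))) atTop (𝓝 (c * L)) :=
        hφt.comp (Filter.tendsto_add_atTop_nat 1)
      have h3 := h2.sub hφt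
      simpa using h3
    set w : ℕ → E := fun k => xseq (d (k+1)) - xseq (d k) with hw
    have hwnull : ∀ φ : E →L[ℝ] ℝ, Tendsto (fun k => φ (w k)) atTop (𝓝 0) := by
      intro φ
      have h4 := hcau φ
      simp only [hw, map_sub]
      exact h4
    have hSnull := hS w hwnull
    have hεle : ∀ k, ε ≤ ‖S (w k)‖ := by
      intro k
      have h5 : S (w k) = y (d (k+1)) - y (d k) := by
        rw [hw]
        simp only [map_sub, hx_eq]
      rw [h5, ← dist_eq_norm, dist_comm]
      exact hy_sep (d k) (d (k+1)) (hdmono (Nat.lt_succ_self k))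
    obtain ⟨k, hk⟩ := (hSnull.eventually_lt_const hε).exists
    exact absurd (hεle k) (not_le.2 hk)
end

section
/- Let M be a C*-algebra, F a Banach space, and T : M → F a 1-C*-summing operator with constant C. Then there exists a positive linear functional f on M with ‖f‖ ≤ 1 such that ‖T x‖ ≤ C f(|x|) for every self-adjoint x ∈ M. -/
open scoped ComplexOrder

private lemma sqrt_smul'' {M : Type*} [CStarAlgebra M] [PartialOrder M] [StarOrderedRing M]
    (c : ℝ) (A : M) (hc : 0 ≤ c) :
    CFC.sqrt (star (c • A) * (c • A)) = c • CFC.sqrt (star A * A) := by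
  rw [star_smul, smul_mul_smul_comm]
  exact CFC.sqrt_unique
    (by rw [smul_mul_smul_comm, CFC.sqrt_mul_sqrt_self _ (star_mul_self_nonneg A)]; simp)
    (smul_nonneg hc (CFC.sqrt_nonneg _))

/-- Pisier's noncommutative Pietsch factorization: if `T : M → F` is 1-C*-summing with
constant `C`, there is a positive functional `f` with `‖f‖ ≤ 1` such that
`‖T x‖ ≤ C * f (|x|)` for every self-adjoint `x`. -/
theorem stmt11 {M F : Type*} [CStarAlgebra M] [PartialOrder M] [StarOrderedRing M]
    [NormedAddCommGroup F] [NormedSpace ℂ F]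
    (T : M →L[ℂ] F) (C : ℝ)
    (hT : ∀ (n : ℕ) (A : Fin n → M), (∀ i, IsSelfAdjoint (A i)) →
      ∑ i, ‖T (A i)‖ ≤ C * ‖∑ i, CFC.sqrt (star (A i) * A i)‖) :
    ∃ f : M →L[ℂ] ℂ, (∀ a : M, 0 ≤ a → 0 ≤ f a) ∧ ‖f‖ ≤ 1 ∧
      ∀ x : M, IsSelfAdjoint x → ‖T x‖ ≤ C * (f (CFC.sqrt (star x * x))).re := by
  rcases le_or_gt C 0 with hC | hC
  · refine ⟨0, by simp, by simp, fun x hx => ?_⟩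
    have h1 := hT 1 (fun _ => x) (fun _ => hx)
    simp only [Fin.sum_univ_one] at h1
    have : C * ‖CFC.sqrt (star x * x)‖ ≤ 0 :=
      mul_nonpos_iff.2 (Or.inr ⟨hC, norm_nonneg _⟩)
    simpa using h1.trans this
  -- main case : C > 0
  set abs : M → M := fun y => CFC.sqrt (star y * y) with habsdef
  set S : M → Set ℝ := fun x => { r | ∃ n, ∃ A : Fin n → M, (∀ i, IsSelfAdjoint (A i)) ∧
      r = C * ‖x + ∑ i, abs (A i)‖ - ∑ i, ‖T (A i)‖ } with hSdef
  have hSne : ∀ x, (S x).Nonempty := by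
    intro x
    exact ⟨C * ‖x‖, 0, fun i => i.elim0, fun i => i.elim0, by simp⟩
  have hSbd : ∀ x r, r ∈ S x → -(C * ‖x‖) ≤ r := by
    rintro x r ⟨n, A, hA, rfl⟩
    have h1 := hT n A hA
    have h2 : ‖∑ i, abs (A i)‖ ≤ ‖x + ∑ i, abs (A i)‖ + ‖x‖ := by
      calc ‖∑ i, abs (A i)‖ = ‖(x + ∑ i, abs (A i)) - x‖ := by rw [add_sub_cancel_left]
        _ ≤ ‖x + ∑ i, abs (A i)‖ + ‖x‖ := norm_sub_le _ _
    nlinarith [hC.le]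
  have hBdd : ∀ x, BddBelow (S x) := fun x => ⟨-(C * ‖x‖), fun r hr => hSbd x r hr⟩
  set N : M → ℝ := fun x => sInf (S x) with hNdef
  have hNle : ∀ x r, r ∈ S x → N x ≤ r := fun x r hr => csInf_le (hBdd x) hr
  have hNnorm : ∀ x, N x ≤ C * ‖x‖ := fun x =>
    hNle x _ ⟨0, fun i => i.elim0, fun i => i.elim0, by simp⟩
  -- subadditivity
  have hcomb : ∀ x y a b, a ∈ S x → b ∈ S y → N (x + y) ≤ a + b := by
    rintro x y a b ⟨n, A, hA, rfl⟩ ⟨m, B, hB, rfl⟩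
    have hmem : C * ‖(x + y) + ∑ i, abs (Fin.append A B i)‖ - ∑ i, ‖T (Fin.append A B i)‖
        ∈ S (x + y) := by
      refine ⟨n + m, Fin.append A B, fun i => ?_, rfl⟩
      refine Fin.addCases (fun j => ?_) (fun j => ?_) i
      · simpa [Fin.append_left] using hA j
      · simpa [Fin.append_right] using hB j
    refine (hNle _ _ hmem).trans ?_
    have hs : ∑ i, abs (Fin.append A B i) = (∑ i, abs (A i)) + ∑ i, abs (B i) := by
      simp [Fin.sum_univ_add, Fin.append_left, Fin.append_right]
    have ht : ∑ i, ‖T (Fin.append A B i)‖ = (∑ i, ‖T (A i)‖) + ∑ i, ‖T (B i)‖ := by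
      simp [Fin.sum_univ_add, Fin.append_left, Fin.append_right]
    have hnorm : ‖(x + y) + ((∑ i, abs (A i)) + ∑ i, abs (B i))‖ ≤
        ‖x + ∑ i, abs (A i)‖ + ‖y + ∑ i, abs (B i)‖ := by
      calc ‖(x + y) + ((∑ i, abs (A i)) + ∑ i, abs (B i))‖
          = ‖(x + ∑ i, abs (A i)) + (y + ∑ i, abs (B i))‖ := by congr 1; abel
        _ ≤ _ := norm_add_le _ _
    rw [hs, ht]
    nlinarith [hC.le]
  have N_add : ∀ x y, N (x + y) ≤ N x + N y := by
    intro x y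
    have h1 : ∀ a ∈ S x, N (x + y) ≤ a + N y := by
      intro a ha
      rw [← sub_le_iff_le_add']
      exact le_csInf (hSne y) fun b hb => by linarith [hcomb x y a b ha hb]
    have h2 : N (x + y) - N y ≤ N x :=
      le_csInf (hSne x) fun a ha => by linarith [h1 a ha]
    linarith
  -- homogeneity
  have hSsmul : ∀ (c : ℝ), 0 < c → ∀ x r, r ∈ S x → c * r ∈ S (c • x) := by
    rintro c hc x r ⟨n, A, hA, rfl⟩
    refine ⟨n, fun i => c • A i, fun i => by rw [IsSelfAdjoint, star_smul, star_trivial, (hA i).star_eq], ?_⟩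
    have h1 : ∀ i, abs (c • A i) = c • abs (A i) := fun i => sqrt_smul'' c (A i) hc.le
    have h2 : ∀ i, ‖T (c • A i)‖ = c * ‖T (A i)‖ := by
      intro i
      rw [T.map_smul_of_tower, norm_smul, Real.norm_of_nonneg hc.le]
    simp only [h1, h2, ← Finset.smul_sum, ← smul_add, norm_smul, Real.norm_of_nonneg hc.le,
      ← Finset.mul_sum]
    ring
  have hscale : ∀ (c : ℝ), 0 < c → ∀ x, N (c • x) ≤ c * N x := by
    intro c hc x
    have h1 : ∀ r ∈ S x, N (c • x) / c ≤ r := by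
      intro r hr
      rw [div_le_iff₀ hc, mul_comm]
      exact hNle _ _ (hSsmul c hc x r hr)
    have h2 : N (c • x) / c ≤ N x := le_csInf (hSne x) h1
    calc N (c • x) = c * (N (c • x) / c) := by field_simp
      _ ≤ c * N x := mul_le_mul_of_nonneg_left h2 hc.le
  have N_hom : ∀ c : ℝ, 0 < c → ∀ x, N (c • x) = c * N x := by
    intro c hc x
    refine le_antisymm (hscale c hc x) ?_
    have := hscale c⁻¹ (inv_pos.2 hc) (c • x)
    rw [smul_smul, inv_mul_cancel₀ hc.ne', one_smul] at this
    calc c * N x ≤ c * (c⁻¹ * N (c • x)) := mul_le_mul_of_nonneg_left this hc.le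
      _ = N (c • x) := by field_simp
  -- Hahn-Banach
  have hf0 : ∀ x : (⊥ : Submodule ℝ M), (0 : (⊥ : Submodule ℝ M) →ₗ[ℝ] ℝ) x ≤ N x := by
    intro x
    have hx0 : (x : M) = 0 := (Submodule.mem_bot ℝ).1 x.2
    simp only [LinearMap.zero_apply, hx0]
    refine le_csInf (hSne 0) ?_
    rintro r ⟨n, A, hA, rfl⟩
    have := hT n A hA
    simp only [zero_add]
    linarith
  obtain ⟨g, -, hg⟩ := exists_extension_of_le_sublinear ⟨⊥, 0⟩ N N_hom N_add hf0
  -- consequences for g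
  have hgnorm : ∀ x, g x ≤ C * ‖x‖ := fun x => (hg x).trans (hNnorm x)
  have hgabs : ∀ x, |g x| ≤ C * ‖x‖ := by
    intro x
    rw [abs_le]
    constructor
    · have := hgnorm (-x)
      rw [map_neg, norm_neg] at this
      linarith
    · exact hgnorm x
  have hkey : ∀ y : M, IsSelfAdjoint y → ‖T y‖ ≤ g (abs y) := by
    intro y hy
    have hmem : (-‖T y‖ : ℝ) ∈ S (-(abs y)) := by
      refine ⟨1, fun _ => y, fun _ => hy, ?_⟩
      simp [habsdef]
    have := (hg (-(abs y))).trans (hNle _ _ hmem)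
    rw [map_neg] at this
    linarith
  have hgpos : ∀ a : M, 0 ≤ a → 0 ≤ g a := by
    intro a ha
    have h1 : abs a = a := by
      rw [habsdef]
      simp only
      rw [(IsSelfAdjoint.of_nonneg ha).star_eq, CFC.sqrt_mul_self a ha]
    have := hkey a (IsSelfAdjoint.of_nonneg ha)
    rw [h1] at this
    linarith [norm_nonneg (T a)]
  -- the real part linear map and scaled functional
  set reL : M →ₗ[ℝ] M :=
    { toFun := fun x => (2 : ℝ)⁻¹ • (x + star x)
      map_add' := fun x y => by
        show (2 : ℝ)⁻¹ • ((x + y) + star (x + y)) =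
          (2 : ℝ)⁻¹ • (x + star x) + (2 : ℝ)⁻¹ • (y + star y)
        rw [star_add, ← smul_add]; congr 1; abel
      map_smul' := fun c x => by
        show (2 : ℝ)⁻¹ • (c • x + star (c • x)) = c • ((2 : ℝ)⁻¹ • (x + star x))
        rw [star_smul, star_trivial, ← smul_add, smul_comm] } with hreL
  have hreL_sa : ∀ a : M, IsSelfAdjoint a → reL a = a := by
    intro a ha
    show (2 : ℝ)⁻¹ • (a + star a) = a
    rw [ha.star_eq, ← two_smul ℝ a, smul_smul]
    norm_num
  have hreL_norm : ∀ x : M, ‖reL x‖ ≤ ‖x‖ := by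
    intro x
    show ‖(2 : ℝ)⁻¹ • (x + star x)‖ ≤ ‖x‖
    rw [norm_smul]
    have := norm_add_le x (star x)
    rw [norm_star] at this
    rw [Real.norm_of_nonneg (by norm_num : (0:ℝ) ≤ (2:ℝ)⁻¹)]
    linarith
  set frlin : M →ₗ[ℝ] ℝ := C⁻¹ • (g ∘ₗ reL) with hfrlin
  have hfr_bound : ∀ x : M, ‖frlin x‖ ≤ 1 * ‖x‖ := by
    intro x
    have h1 : |g (reL x)| ≤ C * ‖x‖ := (hgabs (reL x)).trans
      (mul_le_mul_of_nonneg_left (hreL_norm x) hC.le)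
    show ‖C⁻¹ * g (reL x)‖ ≤ 1 * ‖x‖
    rw [Real.norm_eq_abs, abs_mul, abs_of_nonneg (inv_nonneg.2 hC.le), one_mul]
    calc C⁻¹ * |g (reL x)| ≤ C⁻¹ * (C * ‖x‖) :=
          mul_le_mul_of_nonneg_left h1 (inv_nonneg.2 hC.le)
      _ = ‖x‖ := by field_simp
  set fr : M →L[ℝ] ℝ := LinearMap.mkContinuous frlin 1 hfr_bound with hfr
  set f : M →L[ℂ] ℂ := StrongDual.extendRCLike fr with hfdef
  have hfr_apply : ∀ x : M, fr x = C⁻¹ * g (reL x) := fun x => rfl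
  have hf_apply : ∀ x : M, f x = (fr x : ℂ) - Complex.I * (fr ((Complex.I : ℂ) • x) : ℂ) := by
    intro x
    rw [hfdef, ContinuousLinearMap.extendTo𝕜'_apply]
    norm_num
  have hIm : ∀ a : M, IsSelfAdjoint a → fr ((Complex.I : ℂ) • a) = 0 := by
    intro a ha
    rw [hfr_apply]
    have : reL ((Complex.I : ℂ) • a) = 0 := by
      show (2 : ℝ)⁻¹ • ((Complex.I : ℂ) • a + star ((Complex.I : ℂ) • a)) = 0
      rw [star_smul, ha.star_eq, Complex.star_def, Complex.conj_I, neg_smul, add_neg_cancel,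
        smul_zero]
    rw [this, map_zero, mul_zero]
  have hf_sa : ∀ a : M, IsSelfAdjoint a → f a = ((C⁻¹ * g a : ℝ) : ℂ) := by
    intro a ha
    rw [hf_apply, hIm a ha, Complex.ofReal_zero, mul_zero, sub_zero, hfr_apply, hreL_sa a ha]
  refine ⟨f, ?_, ?_, ?_⟩
  · intro a ha
    rw [hf_sa a (IsSelfAdjoint.of_nonneg ha)]
    rw [show (0 : ℂ) = ((0 : ℝ) : ℂ) by norm_num, Complex.real_le_real]
    exact mul_nonneg (inv_nonneg.2 hC.le) (hgpos a ha)
  · rw [hfdef, ContinuousLinearMap.norm_extendTo𝕜']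
    exact LinearMap.mkContinuous_norm_le _ zero_le_one _
  · intro x hx
    have habs_sa : IsSelfAdjoint (abs x) := IsSelfAdjoint.of_nonneg (CFC.sqrt_nonneg _)
    have h1 : f (CFC.sqrt (star x * x)) = ((C⁻¹ * g (abs x) : ℝ) : ℂ) := hf_sa (abs x) habs_sa
    rw [h1, Complex.ofReal_re]
    have h2 := hkey x hx
    calc ‖T x‖ ≤ g (abs x) := h2
      _ = C * (C⁻¹ * g (abs x)) := by field_simp
end
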